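/- arXiv:1805.01823 — 7 statements merged into one kernel-verified Lean document; each statement's English description precedes it below -/
import Mathlib

section
/- Let k ≥ 1 be an integer and let G be a finite simple graph such that the near-k-twin relation ρ_k of G is an equivalence relation on V(G). Let U and V be two (not necessarily distinct) equivalence classes of ρ_k, each with at least 4k+2 vertices. Then for every vertex v ∈ V we have min{|U ∩ N(v)|, |U \ N(v)|} ≤ 2k. -/
/-!
Suppose `A = U ∩ N(v)` and `B = U \ N(v)` both have more than `2k` vertices, and count the
triples `(w, x, y) ∈ W × A × B` with `x ~ w` and `y ≁ w`. Every `w ∈ W` is a near-`k`-twin of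
`v`, so it is adjacent to all but at most `k` vertices of `A` and to at most `k` vertices of
`B`: there are at least `|W| (|A| - k) (|B| - k)` triples. Any two `x, y ∈ U` are
near-`k`-twins and a counted triple has `w ∈ N(x) △ N(y)`, so there are at most `|A| |B| k`
triples. Since `|W| ≥ 4k + 2`, `2 (|A| - k) > |A|` and `2 (|B| - k) > |B|`, the lower bound
exceeds the upper one.
-/

/-- Two vertices `u`, `v` of a simple graph `G` are *near-`k`-twins* if the symmetric
difference of their open neighbourhoods has at most `k` elements. -/
def nearTwin {V : Type*} (G : SimpleGraph V) (k : ℕ) (u v : V) : Prop :=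
  (symmDiff (G.neighborSet u) (G.neighborSet v)).ncard ≤ k

open Finset

namespace nearTwin

variable {V : Type*} [Finite V] {G : SimpleGraph V} [DecidableRel G.Adj] {k : ℕ} {u v : V}

theorem card_filter_not_adj_iff_le (h : nearTwin G k u v) (s : Finset V) :
    #{x ∈ s | ¬(G.Adj u x ↔ G.Adj v x)} ≤ k := by
  have hsub : (↑({x ∈ s | ¬(G.Adj u x ↔ G.Adj v x)}) : Set V) ⊆
      symmDiff (G.neighborSet u) (G.neighborSet v) := by
    intro x hx
    simp only [coe_filter, Set.mem_ofPred_eq] at hx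
    simp only [Set.mem_symmDiff, SimpleGraph.mem_neighborSet]
    tauto
  rw [← Set.ncard_coe_finset]
  exact (Set.ncard_le_ncard hsub (Set.toFinite _)).trans h

theorem card_sub_le_card_filter_adj (h : nearTwin G k u v) {s : Finset V}
    (hs : ∀ x ∈ s, G.Adj u x) : #s - k ≤ #{x ∈ s | G.Adj v x} := by
  have hnot : {x ∈ s | ¬G.Adj v x} = {x ∈ s | ¬(G.Adj u x ↔ G.Adj v x)} :=
    filter_congr fun x hx ↦ by simp [hs x hx]
  have hsplit := card_filter_add_card_filter_not (s := s) (p := (G.Adj v ·))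
  rw [hnot] at hsplit
  have := h.card_filter_not_adj_iff_le s
  omega

theorem card_sub_le_card_filter_not_adj (h : nearTwin G k u v) {s : Finset V}
    (hs : ∀ x ∈ s, ¬G.Adj u x) : #s - k ≤ #{x ∈ s | ¬G.Adj v x} := by
  have hadj : {x ∈ s | G.Adj v x} = {x ∈ s | ¬(G.Adj u x ↔ G.Adj v x)} :=
    filter_congr fun x hx ↦ by simp [hs x hx]
  have hsplit := card_filter_add_card_filter_not (s := s) (p := (G.Adj v ·))
  rw [hadj] at hsplit
  have := h.card_filter_not_adj_iff_le s
  omega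

end nearTwin

theorem card_mul_card_sub_mul_card_sub_le {V : Type*} [Finite V] {G : SimpleGraph V}
    [DecidableRel G.Adj] {k : ℕ} {v : V} {A B W : Finset V}
    (hA : ∀ x ∈ A, G.Adj v x) (hB : ∀ y ∈ B, ¬G.Adj v y)
    (hW : ∀ w ∈ W, nearTwin G k v w) (hAB : ∀ x ∈ A, ∀ y ∈ B, nearTwin G k x y) :
    #W * ((#A - k) * (#B - k)) ≤ #A * #B * k := by
  rw [← card_product]
  refine card_mul_le_card_mul (fun w (p : V × V) ↦ G.Adj w p.1 ∧ ¬G.Adj w p.2)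
    (fun w hw ↦ ?_) (fun p hp ↦ ?_)
  · have hAbove : (A ×ˢ B).bipartiteAbove (fun w (p : V × V) ↦ G.Adj w p.1 ∧ ¬G.Adj w p.2) w =
        {x ∈ A | G.Adj w x} ×ˢ {y ∈ B | ¬G.Adj w y} :=
      filter_product (G.Adj w ·) (¬G.Adj w ·)
    rw [hAbove, card_product]
    exact Nat.mul_le_mul ((hW w hw).card_sub_le_card_filter_adj hA)
      ((hW w hw).card_sub_le_card_filter_not_adj hB)
  · obtain ⟨hx, hy⟩ := mem_product.mp hp
    refine (card_le_card fun w hw ↦ ?_).trans ((hAB _ hx _ hy).card_filter_not_adj_iff_le W)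
    simp only [mem_bipartiteBelow, mem_filter] at hw ⊢
    exact ⟨hw.1, fun h ↦ hw.2.2 (h.mp hw.2.1.symm).symm⟩

theorem not_mul_sub_mul_sub_le {k n a b : ℕ} (hn : 4 * k + 2 ≤ n) (ha : 2 * k < a)
    (hb : 2 * k < b) : ¬n * ((a - k) * (b - k)) ≤ a * b * k := by
  obtain ⟨a', rfl⟩ : ∃ a', a = a' + k := ⟨a - k, by omega⟩
  obtain ⟨b', rfl⟩ : ∃ b', b = b' + k := ⟨b - k, by omega⟩
  simp only [Nat.add_sub_cancel, not_le]
  -- `2 (a - k) ≥ a + 1` and `2 (b - k) ≥ b + 1`, so `4 (a - k) (b - k) > a b`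
  nlinarith [Nat.mul_le_mul (show a' + k + 1 ≤ 2 * a' by omega)
      (show b' + k + 1 ≤ 2 * b' by omega),
    Nat.mul_le_mul_right (a' * b') hn]

theorem stmt0_general {V : Type*} [Fintype V] (G : SimpleGraph V) (k : ℕ)
    (heq : Equivalence (nearTwin G k))
    (U W : Set V)
    (hU : ∃ u, U = {x | nearTwin G k u x})
    (hW : ∃ w, W = {x | nearTwin G k w x})
    (hWcard : 4 * k + 2 ≤ W.ncard)
    (v : V) (hv : v ∈ W) :
    min ((U ∩ G.neighborSet v).ncard) ((U \ G.neighborSet v).ncard) ≤ 2 * k := by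
  classical
  obtain ⟨u, rfl⟩ := hU
  obtain ⟨w, rfl⟩ := hW
  by_contra! hbig
  rw [lt_min_iff, Set.ncard_eq_toFinset_card', Set.ncard_eq_toFinset_card'] at hbig
  rw [Set.ncard_eq_toFinset_card'] at hWcard
  refine not_mul_sub_mul_sub_le hWcard hbig.1 hbig.2 (card_mul_card_sub_mul_card_sub_le
    (G := G) (v := v) (fun x hx ↦ (Set.mem_toFinset.mp hx).2)
    (fun y hy ↦ (Set.mem_toFinset.mp hy).2)
    (fun x hx ↦ heq.trans (heq.symm hv) (Set.mem_toFinset.mp hx : x ∈ {x | nearTwin G k w x}))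
    (fun x hx y hy ↦ heq.trans (heq.symm (Set.mem_toFinset.mp hx).1) (Set.mem_toFinset.mp hy).1))

theorem stmt0 {V : Type*} [Fintype V] (G : SimpleGraph V) (k : ℕ) (hk : 1 ≤ k)
    (heq : Equivalence (nearTwin G k))
    (U W : Set V)
    (hU : ∃ u, U = {x | nearTwin G k u x})
    (hW : ∃ w, W = {x | nearTwin G k w x})
    (hUcard : 4 * k + 2 ≤ U.ncard) (hWcard : 4 * k + 2 ≤ W.ncard)
    (v : V) (hv : v ∈ W) :
    min ((U ∩ G.neighborSet v).ncard) ((U \ G.neighborSet v).ncard) ≤ 2 * k :=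
  stmt0_general G k heq U W hU hW hWcard v hv
end

section
/- Let k ≥ 1 be an integer and let G be a finite simple graph such that the near-k-twin relation ρ_k of G is an equivalence relation on V(G). Let U and V be two (not necessarily distinct) equivalence classes of ρ_k, each with at least 5k+1 vertices. Then exactly one of the following holds: (a) every vertex of U has at most 2k neighbours in V and every vertex of V has at most 2k neighbours in U; or (b) every vertex of U is adjacent to all but at most 2k vertices of V and every vertex of V is adjacent to all but at most 2k vertices of U. -/
open Finset

theorem Equivalence.rel_of_mem_of_eq_setOf {α : Type*} {r : α → α → Prop} (h : Equivalence r)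
    {s : Set α} (hs : ∃ a, s = {x | r a x}) : ∀ x ∈ s, ∀ y ∈ s, r x y := by
  obtain ⟨a, rfl⟩ := hs
  exact fun x hx y hy => h.trans (h.symm hx) hy

namespace SimpleGraph

variable {V : Type*} {G : SimpleGraph V} [DecidableRel G.Adj]

theorem ncard_coe_inter_neighborSet (s : Finset V) (u : V) :
    ((s : Set V) ∩ G.neighborSet u).ncard = #{w ∈ s | G.Adj u w} := by
  rw [← Set.ncard_coe_finset, coe_filter]
  rfl

theorem ncard_coe_diff_neighborSet (s : Finset V) (u : V) :
    ((s : Set V) \ G.neighborSet u).ncard = #{w ∈ s | ¬ G.Adj u w} := by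
  rw [← Set.ncard_coe_finset, coe_filter]
  rfl

end SimpleGraph

section NearTwinClasses

variable {V : Type*} {G : SimpleGraph V} {k : ℕ}

theorem nearTwin.card_le_of_adj_of_not_adj [Finite V] {x y : V} (h : nearTwin G k x y)
    {s : Finset V} (hs : ∀ v ∈ s, G.Adj x v ∧ ¬ G.Adj y v) : #s ≤ k :=
  calc #s = (s : Set V).ncard := (Set.ncard_coe_finset s).symm
    _ ≤ (symmDiff (G.neighborSet x) (G.neighborSet y)).ncard :=
      Set.ncard_le_ncard (fun v hv => Set.mem_symmDiff.2 (Or.inl (hs v hv))) (Set.toFinite _)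
    _ ≤ k := h

variable [DecidableRel G.Adj]

theorem nearTwin.card_filter_not_adj_le [Finite V] {x y : V} (h : nearTwin G k x y)
    (s : Finset V) : #{v ∈ s | ¬ G.Adj y v} ≤ #{v ∈ s | ¬ G.Adj x v} + k := by
  have hsplit := card_filter_add_card_filter_not (s := {v ∈ s | ¬ G.Adj y v}) (G.Adj x ·)
  have hfew : #{v ∈ {v ∈ s | ¬ G.Adj y v} | G.Adj x v} ≤ k :=
    h.card_le_of_adj_of_not_adj (by simp +contextual)
  have hsub : #{v ∈ {v ∈ s | ¬ G.Adj y v} | ¬ G.Adj x v} ≤ #{v ∈ s | ¬ G.Adj x v} :=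
    card_le_card (by intro v; simp +contextual)
  omega

theorem sum_card_adj_mul_card_not_adj_le [Finite V] (U A B : Finset V)
    (hAB : ∀ w ∈ A, ∀ w' ∈ B, nearTwin G k w w') :
    ∑ u ∈ U, #{w ∈ A | G.Adj u w} * #{w' ∈ B | ¬ G.Adj u w'} ≤ #A * #B * k :=
  calc ∑ u ∈ U, #{w ∈ A | G.Adj u w} * #{w' ∈ B | ¬ G.Adj u w'}
      = ∑ w ∈ A, ∑ w' ∈ B, #{u ∈ U | G.Adj u w ∧ ¬ G.Adj u w'} := by
        simp only [card_filter, sum_mul_sum, ite_zero_mul_ite_zero, mul_one]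
        rw [sum_comm]
        exact sum_congr rfl fun _ _ => sum_comm
    _ ≤ ∑ _w ∈ A, ∑ _w' ∈ B, k :=
        sum_le_sum fun w hw => sum_le_sum fun w' hw' =>
          (hAB w hw w' hw').card_le_of_adj_of_not_adj (by simp +contextual [G.adj_comm])
    _ = #A * #B * k := by simp [mul_assoc]

section PairwiseNearTwins

variable [Finite V] {U W : Finset V} (hU : ∀ x ∈ U, ∀ y ∈ U, nearTwin G k x y)
  (hW : ∀ x ∈ W, ∀ y ∈ W, nearTwin G k x y) (hUcard : 5 * k + 1 ≤ #U)
include hU hW hUcard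

theorem card_adj_le_or_card_not_adj_le {u : V} (hu : u ∈ U) :
    #{w ∈ W | G.Adj u w} ≤ 2 * k ∨ #{w ∈ W | ¬ G.Adj u w} ≤ 2 * k := by
  by_contra! h
  obtain ⟨A, hA, hAcard⟩ := exists_subset_card_eq h.1
  obtain ⟨B, hB, hBcard⟩ := exists_subset_card_eq h.2
  have hrow : ∀ u' ∈ U,
      (k + 1) * (k + 1) ≤ #{w ∈ A | G.Adj u' w} * #{w' ∈ B | ¬ G.Adj u' w'} := by
    intro u' hu'
    have hAfew : #{w ∈ A | ¬ G.Adj u' w} ≤ k :=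
      (hU u hu u' hu').card_le_of_adj_of_not_adj fun w hw => by
        simp only [mem_filter] at hw
        exact ⟨(mem_filter.1 (hA hw.1)).2, hw.2⟩
    have hBfew : #{w' ∈ B | G.Adj u' w'} ≤ k :=
      (hU u' hu' u hu).card_le_of_adj_of_not_adj fun w' hw' => by
        simp only [mem_filter] at hw'
        exact ⟨hw'.2, (mem_filter.1 (hB hw'.1)).2⟩
    have hAsplit := card_filter_add_card_filter_not (s := A) (G.Adj u' ·)
    have hBsplit := card_filter_add_card_filter_not (s := B) (G.Adj u' ·)
    exact Nat.mul_le_mul (by omega) (by omega)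
  have hlower : #U * ((k + 1) * (k + 1)) ≤ #A * #B * k := by
    refine le_trans ?_ (sum_card_adj_mul_card_not_adj_le U A B fun w hw w' hw' =>
      hW w (mem_filter.1 (hA hw)).1 w' (mem_filter.1 (hB hw')).1)
    simpa using sum_le_sum hrow
  rw [hAcard, hBcard] at hlower
  nlinarith [Nat.mul_le_mul_right ((k + 1) * (k + 1)) hUcard]

theorem forall_card_adj_le_or_forall_card_not_adj_le (hWcard : 5 * k + 1 ≤ #W) :
    (∀ u ∈ U, #{w ∈ W | G.Adj u w} ≤ 2 * k) ∨ (∀ u ∈ U, #{w ∈ W | ¬ G.Adj u w} ≤ 2 * k) := by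
  refine or_iff_not_imp_left.2 fun h => ?_
  push Not at h
  obtain ⟨u₁, hu₁, hmany⟩ := h
  have hfew₁ := (card_adj_le_or_card_not_adj_le hU hW hUcard hu₁).resolve_left (by omega)
  intro u hu
  refine (card_adj_le_or_card_not_adj_le hU hW hUcard hu).resolve_left fun hfew => ?_
  -- `u` has at most `3k` non-neighbours in `W`, being a near-twin of `u₁`.
  have hclose := (hU u₁ hu₁ u hu).card_filter_not_adj_le W
  have hsplit := card_filter_add_card_filter_not (s := W) (G.Adj u ·)
  omega

end PairwiseNearTwins

theorem not_forall_card_adj_le_and_forall_card_not_adj_le {U W : Finset V}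
    (hUcard : 5 * k + 1 ≤ #U) (hWcard : 5 * k + 1 ≤ #W) :
    ¬ ((∀ u ∈ U, #{w ∈ W | G.Adj u w} ≤ 2 * k) ∧ ∀ w ∈ W, #{u ∈ U | ¬ G.Adj w u} ≤ 2 * k) := by
  rintro ⟨hUW, hWU⟩
  have hedges : #W * (#U - 2 * k) ≤ #U * (2 * k) :=
    card_mul_le_card_mul G.Adj
      (fun w hw => by
        have hsplit := card_filter_add_card_filter_not (s := U) (G.Adj w ·)
        have := hWU w hw
        simp only [bipartiteAbove]
        omega)
      (fun u hu => by simpa only [bipartiteBelow, G.adj_comm _ u] using hUW u hu)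
  obtain ⟨m, hm, hUm⟩ : ∃ m, 3 * k + 1 ≤ m ∧ #U = m + 2 * k := ⟨#U - 2 * k, by omega, by omega⟩
  rw [hUm, Nat.add_sub_cancel] at hedges
  nlinarith [Nat.mul_le_mul_right m hWcard]

theorem xor_forall_card_adj_le_forall_card_not_adj_le [Finite V] {U W : Finset V}
    (hU : ∀ x ∈ U, ∀ y ∈ U, nearTwin G k x y) (hW : ∀ x ∈ W, ∀ y ∈ W, nearTwin G k x y)
    (hUcard : 5 * k + 1 ≤ #U) (hWcard : 5 * k + 1 ≤ #W) :
    Xor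
      ((∀ u ∈ U, #{w ∈ W | G.Adj u w} ≤ 2 * k) ∧ ∀ w ∈ W, #{u ∈ U | G.Adj w u} ≤ 2 * k)
      ((∀ u ∈ U, #{w ∈ W | ¬ G.Adj u w} ≤ 2 * k) ∧ ∀ w ∈ W, #{u ∈ U | ¬ G.Adj w u} ≤ 2 * k) := by
  obtain ⟨u, hu⟩ : U.Nonempty := card_pos.1 (by omega)
  have hsplit := card_filter_add_card_filter_not (s := W) (G.Adj u ·)
  rcases forall_card_adj_le_or_forall_card_not_adj_le hU hW hUcard hWcard with hUW | hUW <;>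
    rcases forall_card_adj_le_or_forall_card_not_adj_le hW hU hWcard hUcard with hWU | hWU
  · exact Or.inl ⟨⟨hUW, hWU⟩, fun h => by have := h.1 u hu; have := hUW u hu; omega⟩
  · exact (not_forall_card_adj_le_and_forall_card_not_adj_le hUcard hWcard ⟨hUW, hWU⟩).elim
  · exact (not_forall_card_adj_le_and_forall_card_not_adj_le hWcard hUcard ⟨hWU, hUW⟩).elim
  · exact Or.inr ⟨⟨hUW, hWU⟩, fun h => by have := h.1 u hu; have := hUW u hu; omega⟩

end NearTwinClasses

theorem stmt1_general {V : Type*} [Fintype V] (G : SimpleGraph V) (k : ℕ)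
    (heq : Equivalence (nearTwin G k))
    (U W : Set V)
    (hU : ∃ u, U = {x | nearTwin G k u x})
    (hW : ∃ w, W = {x | nearTwin G k w x})
    (hUcard : 5 * k + 1 ≤ U.ncard) (hWcard : 5 * k + 1 ≤ W.ncard) :
    Xor'
      ((∀ u ∈ U, (W ∩ G.neighborSet u).ncard ≤ 2 * k) ∧
        (∀ w ∈ W, (U ∩ G.neighborSet w).ncard ≤ 2 * k))
      ((∀ u ∈ U, (W \ G.neighborSet u).ncard ≤ 2 * k) ∧
        (∀ w ∈ W, (U \ G.neighborSet w).ncard ≤ 2 * k)) := by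
  classical
  have hUtwins := heq.rel_of_mem_of_eq_setOf hU
  have hWtwins := heq.rel_of_mem_of_eq_setOf hW
  obtain ⟨U, rfl⟩ := U.toFinite.exists_finset_coe
  obtain ⟨W, rfl⟩ := W.toFinite.exists_finset_coe
  rw [Set.ncard_coe_finset] at hUcard hWcard
  simp only [SimpleGraph.ncard_coe_inter_neighborSet,
    SimpleGraph.ncard_coe_diff_neighborSet]
  exact xor_forall_card_adj_le_forall_card_not_adj_le hUtwins hWtwins hUcard hWcard

theorem stmt1 {V : Type*} [Fintype V] (G : SimpleGraph V) (k : ℕ) (hk : 1 ≤ k)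
    (heq : Equivalence (nearTwin G k))
    (U W : Set V)
    (hU : ∃ u, U = {x | nearTwin G k u x})
    (hW : ∃ w, W = {x | nearTwin G k w x})
    (hUcard : 5 * k + 1 ≤ U.ncard) (hWcard : 5 * k + 1 ≤ W.ncard) :
    Xor'
      ((∀ u ∈ U, (W ∩ G.neighborSet u).ncard ≤ 2 * k) ∧
        (∀ w ∈ W, (U ∩ G.neighborSet w).ncard ≤ 2 * k))
      ((∀ u ∈ U, (W \ G.neighborSet u).ncard ≤ 2 * k) ∧
        (∀ w ∈ W, (U \ G.neighborSet w).ncard ≤ 2 * k)) :=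
  stmt1_general G k heq U W hU hW hUcard hWcard
end

section
/- Let k ≥ 1 be an integer and let G be a finite simple graph such that the near-k-twin relation ρ_k of G is an equivalence relation on V(G). Let U be an equivalence class of ρ_k with at least 5k+1 vertices. Then either every vertex of U has at most 2k neighbours in U, or every vertex of U has at least |U| − 2k neighbours in U (and these two alternatives are mutually exclusive). -/
section

variable {V : Type*} [Finite V] (G : SimpleGraph V) {k : ℕ}

lemma ncard_neighborSet_diff_le_of_nearTwin {x y : V} (h : nearTwin G k x y) :
    (G.neighborSet x \ G.neighborSet y).ncard ≤ k :=
  (Set.ncard_le_ncard fun _ hx => Set.mem_symmDiff.mpr (Or.inl hx)).trans h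

lemma ncard_inter_neighborSet_le_of_nearTwin (S : Set V) {x y : V} (h : nearTwin G k x y) :
    (S ∩ G.neighborSet x).ncard ≤ (S ∩ G.neighborSet y).ncard + k := by
  have hsub : S ∩ G.neighborSet x ⊆
      (S ∩ G.neighborSet y) ∪ (G.neighborSet x \ G.neighborSet y) := by
    rintro a ⟨haS, hax⟩
    by_cases hay : a ∈ G.neighborSet y
    exacts [Or.inl ⟨haS, hay⟩, Or.inr ⟨hax, hay⟩]
  calc (S ∩ G.neighborSet x).ncard
      ≤ ((S ∩ G.neighborSet y) ∪ (G.neighborSet x \ G.neighborSet y)).ncard :=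
        Set.ncard_le_ncard hsub
    _ ≤ (S ∩ G.neighborSet y).ncard + (G.neighborSet x \ G.neighborSet y).ncard :=
        Set.ncard_union_le _ _
    _ ≤ (S ∩ G.neighborSet y).ncard + k :=
        Nat.add_le_add_left (ncard_neighborSet_diff_le_of_nearTwin G h) _

lemma ncard_mul_le_ncard_mul_of_inter_neighborSet {A C : Set V} {m n : ℕ}
    (hC : ∀ c ∈ C, m ≤ (A ∩ G.neighborSet c).ncard)
    (hA : ∀ a ∈ A, (C ∩ G.neighborSet a).ncard ≤ n) :
    C.ncard * m ≤ A.ncard * n := by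
  classical
  have := Fintype.ofFinite V
  have hinter (S : Set V) (x : V) :
      (S ∩ G.neighborSet x).ncard = (S.toFinset.bipartiteAbove G.Adj x).card := by
    rw [← Set.ncard_coe_finset, Finset.coe_bipartiteAbove]
    congr 1
    ext
    simp
  rw [Set.ncard_eq_toFinset_card', Set.ncard_eq_toFinset_card']
  refine Finset.card_mul_le_card_mul G.Adj (fun c hc => ?_) (fun a ha => ?_)
  · rw [← hinter]
    exact hC c (Set.mem_toFinset.mp hc)
  · rw [Finset.bipartiteBelow, Finset.filter_congr (fun _ _ => G.adj_comm _ _),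
      ← Finset.bipartiteAbove, ← hinter]
    exact hA a (Set.mem_toFinset.mp ha)

theorem ncard_le_ncard_inter_neighborSet_add {U : Set V}
    (hU : ∀ x ∈ U, ∀ y ∈ U, nearTwin G k x y) {u : V} (hu : u ∈ U)
    (hdeg : 2 * k + 1 ≤ (U ∩ G.neighborSet u).ncard) :
    U.ncard ≤ (U ∩ G.neighborSet u).ncard + 2 * k := by
  set A := U ∩ G.neighborSet u
  set C := U \ G.neighborSet u
  have hC : ∀ c ∈ C, A.ncard - k ≤ (A ∩ G.neighborSet c).ncard := fun c hc => by
    have := ncard_inter_neighborSet_le_of_nearTwin G A (hU u hu c hc.1)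
    rwa [Set.inter_eq_left.mpr Set.inter_subset_right, ← Nat.sub_le_iff_le_add] at this
  have hA : ∀ a ∈ A, (C ∩ G.neighborSet a).ncard ≤ k := fun a ha =>
    calc (C ∩ G.neighborSet a).ncard ≤ (G.neighborSet a \ G.neighborSet u).ncard :=
          Set.ncard_le_ncard fun _ hx => ⟨hx.2, hx.1.2⟩
      _ ≤ k := ncard_neighborSet_diff_le_of_nearTwin G (hU a ha.1 u hu)
  have hcount := ncard_mul_le_ncard_mul_of_inter_neighborSet G hC hA
  have hCsmall : C.ncard ≤ 2 * k := by
    by_contra! hCbig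
    obtain ⟨e, he⟩ : ∃ e, A.ncard = e + k := ⟨A.ncard - k, by omega⟩
    rw [he, Nat.add_sub_cancel] at hcount
    nlinarith
  have hsplit : A.ncard + C.ncard = U.ncard := Set.ncard_inter_add_ncard_sdiff_eq_ncard _ _
  omega

end

theorem stmt2_general {V : Type*} [Fintype V] (G : SimpleGraph V) (k : ℕ)
    (heq : Equivalence (nearTwin G k))
    (U : Set V)
    (hU : ∃ u, U = {x | nearTwin G k u x})
    (hUcard : 5 * k + 1 ≤ U.ncard) :
    Xor'
      (∀ u ∈ U, (U ∩ G.neighborSet u).ncard ≤ 2 * k)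
      (∀ u ∈ U, U.ncard - 2 * k ≤ (U ∩ G.neighborSet u).ncard) := by
  obtain ⟨u₀, hU⟩ := hU
  have hrel : ∀ x ∈ U, ∀ y ∈ U, nearTwin G k x y := by
    rw [hU]
    exact fun x hx y hy => heq.trans (heq.symm hx) hy
  obtain ⟨w, hw⟩ : U.Nonempty := Set.nonempty_of_ncard_ne_zero (by omega)
  by_cases hsmall : ∀ u ∈ U, (U ∩ G.neighborSet u).ncard ≤ 2 * k
  · exact Or.inl ⟨hsmall, fun hbig => by have := hsmall w hw; have := hbig w hw; omega⟩
  push Not at hsmall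
  obtain ⟨u, hu, hdeg⟩ := hsmall
  have hlarge := ncard_le_ncard_inter_neighborSet_add G hrel hu hdeg
  refine Or.inr ⟨fun v hv => ?_, fun hall => by have := hall u hu; omega⟩
  have hclose := ncard_inter_neighborSet_le_of_nearTwin G U (hrel u hu v hv)
  have := ncard_le_ncard_inter_neighborSet_add G hrel hv (by omega)
  omega

theorem stmt2 {V : Type*} [Fintype V] (G : SimpleGraph V) (k : ℕ) (hk : 1 ≤ k)
    (heq : Equivalence (nearTwin G k))
    (U : Set V)
    (hU : ∃ u, U = {x | nearTwin G k u x})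
    (hUcard : 5 * k + 1 ≤ U.ncard) :
    Xor'
      (∀ u ∈ U, (U ∩ G.neighborSet u).ncard ≤ 2 * k)
      (∀ u ∈ U, U.ncard - 2 * k ≤ (U ∩ G.neighborSet u).ncard) :=
  stmt2_general G k heq U hU hUcard
end

section
/- For every class 𝒞 of finite simple graphs, the following are equivalent: (1) 𝒞 is near-uniform, i.e., there exist k₀, p ∈ ℕ such that every graph in 𝒞 is (k₀,p)-near-uniform; (2) 𝒞 is near-covered, i.e., there exist ℓ, q ∈ ℕ such that every graph in 𝒞 is (ℓ,q)-near-covered. -/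
/-- A graph is `(k₀, p)`-near-uniform if for some `k ≤ k₀` the near-`k`-twin relation is
an equivalence relation with at most `p` equivalence classes. -/
def NearUniform {V : Type*} (G : SimpleGraph V) (k₀ p : ℕ) : Prop :=
  ∃ k ≤ k₀, Equivalence (nearTwin G k) ∧
    {C : Set V | ∃ u, C = {v | nearTwin G k u v}}.ncard ≤ p

/-- A graph is `(ℓ, q)`-near-covered if there is a set `S` of at most `q` vertices such that
every vertex is a near-`ℓ`-twin of some element of `S`. -/
def NearCovered {V : Type*} (G : SimpleGraph V) (ℓ q : ℕ) : Prop :=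
  ∃ S : Set V, S.ncard ≤ q ∧ ∀ v, ∃ s ∈ S, nearTwin G ℓ s v

/-!
A near-uniform graph is near-covered by one representative of each class. Conversely, let
`S` be a set of at most `q` centres covering `G` at distance `ℓ`, where the distance of two
vertices is the size of the symmetric difference of their neighbourhoods. The at most `q²`
distances between centres cannot meet all of the `q² + 1` pairwise disjoint windows
`(k - 2ℓ, 2k + 2ℓ]` for the scales `k = (4ℓ + 1) 3^i`, `i ≤ q²`. At a scale `k` whose window
is avoided, near-`k`-twinship is transitive: if `u ~ v ~ w` with centres `s` of `u` and `t`
of `w`, then `d(s, t) ≤ 2k + 2ℓ`, hence `d(s, t) ≤ k - 2ℓ` and `d(u, w) ≤ k`. Every class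
then contains a centre, so there are at most `q` classes.
-/

def twinScale (ℓ i : ℕ) : ℕ := (4 * ℓ + 1) * 3 ^ i

lemma twinScale_mono (ℓ : ℕ) : Monotone (twinScale ℓ) := fun _ _ hij =>
  Nat.mul_le_mul_left _ (Nat.pow_le_pow_right (by norm_num) hij)

lemma le_twinScale (ℓ i : ℕ) : 4 * ℓ + 1 ≤ twinScale ℓ i :=
  Nat.le_mul_of_pos_right _ (by positivity)

lemma two_mul_twinScale_add_lt_twinScale (ℓ : ℕ) {i j : ℕ} (hij : i < j) :
    2 * twinScale ℓ i + 4 * ℓ < twinScale ℓ j := by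
  have hsucc : twinScale ℓ (i + 1) = 3 * twinScale ℓ i := by
    simp only [twinScale, pow_succ]; ring
  have := twinScale_mono ℓ (show i + 1 ≤ j from hij)
  have := le_twinScale ℓ i
  omega

lemma exists_twinScale_avoiding (ℓ m : ℕ) (D : Finset ℕ) (hD : D.card ≤ m) :
    ∃ i ≤ m, ∀ d ∈ D, d + 2 * ℓ ≤ twinScale ℓ i ∨ 2 * twinScale ℓ i + 2 * ℓ < d := by
  by_contra! hmeet
  have hwindow : ∀ i ∈ Finset.range (m + 1), ∃ d ∈ D,
      twinScale ℓ i < d + 2 * ℓ ∧ d ≤ 2 * twinScale ℓ i + 2 * ℓ := fun i hi =>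
    hmeet i (Nat.lt_succ_iff.mp (Finset.mem_range.mp hi))
  choose! f hfD hf using hwindow
  have hinj : Set.InjOn f (Finset.range (m + 1)) := by
    intro i hi j hj hfij
    by_contra hne
    have hi' := hf i hi
    have hj' := hf j hj
    rw [hfij] at hi'
    rcases Nat.lt_or_gt_of_ne hne with hlt | hlt <;>
      have := two_mul_twinScale_add_lt_twinScale ℓ hlt <;> omega
  have := Finset.card_le_card_of_injOn f hfD hinj
  rw [Finset.card_range] at this
  omega

namespace SimpleGraph

variable {V : Type*} (G : SimpleGraph V)

noncomputable def nbhdDist (u v : V) : ℕ :=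
  (symmDiff (G.neighborSet u) (G.neighborSet v)).ncard

lemma nearTwin_iff_nbhdDist_le {k : ℕ} {u v : V} : nearTwin G k u v ↔ G.nbhdDist u v ≤ k :=
  Iff.rfl

lemma nbhdDist_self (u : V) : G.nbhdDist u u = 0 := by
  simp [nbhdDist]

lemma nbhdDist_comm (u v : V) : G.nbhdDist u v = G.nbhdDist v u := by
  simp only [nbhdDist, symmDiff_comm]

lemma nbhdDist_triangle [Finite V] (u v w : V) :
    G.nbhdDist u w ≤ G.nbhdDist u v + G.nbhdDist v w :=
  (Set.ncard_le_ncard (symmDiff_triangle _ _ _)).trans (Set.ncard_union_le _ _)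

end SimpleGraph

open SimpleGraph

section NearTwin

variable {V : Type*} {G : SimpleGraph V} {k : ℕ} {u v : V}

lemma nearTwin_refl (G : SimpleGraph V) (k : ℕ) (u : V) : nearTwin G k u u := by
  simp [nearTwin_iff_nbhdDist_le, nbhdDist_self]

lemma nearTwin.symm (h : nearTwin G k u v) : nearTwin G k v u := by
  rwa [nearTwin_iff_nbhdDist_le, nbhdDist_comm]

lemma nearTwin.mono {k' : ℕ} (h : nearTwin G k u v) (hk : k ≤ k') : nearTwin G k' u v :=
  h.trans hk

lemma nearTwin_trans_of_avoiding [Finite V] {ℓ : ℕ} {S : Set V}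
    (hcov : ∀ v, ∃ s ∈ S, nearTwin G ℓ s v)
    (havoid : ∀ s ∈ S, ∀ t ∈ S,
      G.nbhdDist s t + 2 * ℓ ≤ k ∨ 2 * k + 2 * ℓ < G.nbhdDist s t)
    {w : V} (huv : nearTwin G k u v) (hvw : nearTwin G k v w) : nearTwin G k u w := by
  obtain ⟨s, hs, hsu⟩ := hcov u
  obtain ⟨t, ht, htw⟩ := hcov w
  rw [nearTwin_iff_nbhdDist_le] at huv hvw hsu htw ⊢
  have hst : G.nbhdDist s t ≤ 2 * k + 2 * ℓ := by
    have := G.nbhdDist_triangle s u v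
    have := G.nbhdDist_triangle s v w
    have := G.nbhdDist_triangle s w t
    have := G.nbhdDist_comm w t
    omega
  have := G.nbhdDist_triangle u s t
  have := G.nbhdDist_triangle u t w
  have := G.nbhdDist_comm u s
  have := havoid s hs t ht
  omega

lemma ncard_nearTwin_classes_le [Finite V] {S : Set V} (heq : Equivalence (nearTwin G k))
    (hcov : ∀ v, ∃ s ∈ S, nearTwin G k s v) :
    {C : Set V | ∃ u, C = {v | nearTwin G k u v}}.ncard ≤ S.ncard := by
  have hsub : {C : Set V | ∃ u, C = {v | nearTwin G k u v}} ⊆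
      (fun s => {v | nearTwin G k s v}) '' S := by
    rintro C ⟨u, rfl⟩
    obtain ⟨s, hs, hsu⟩ := hcov u
    refine ⟨s, hs, Set.ext fun v => ⟨heq.trans (heq.symm hsu), heq.trans hsu⟩⟩
  exact (Set.ncard_le_ncard hsub).trans (Set.ncard_image_le S.toFinite)

end NearTwin

variable {V : Type*} {G : SimpleGraph V}

lemma NearUniform.nearCovered {k₀ p : ℕ} (h : NearUniform G k₀ p) : NearCovered G k₀ p := by
  obtain ⟨k, hk, -, hcard⟩ := h
  set cls : V → Set V := fun u => {v | nearTwin G k u v}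
  have hclasses : {C : Set V | ∃ u, C = cls u} = cls '' Set.univ := by
    ext C; simp [eq_comm]
  obtain ⟨S, hS, hinj⟩ := Set.exists_image_eq_and_injOn Set.univ cls
  refine ⟨S, by rwa [← hinj.ncard_image, hS, ← hclasses], fun v => ?_⟩
  obtain ⟨s, hs, hsv⟩ : cls v ∈ cls '' S := hS ▸ Set.mem_image_of_mem cls (Set.mem_univ v)
  exact ⟨s, hs, (show v ∈ cls s from hsv ▸ nearTwin_refl G k v).mono hk⟩

lemma NearCovered.nearUniform [Finite V] {ℓ q : ℕ} (h : NearCovered G ℓ q) :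
    NearUniform G (twinScale ℓ (q * q)) q := by
  obtain ⟨S, hSq, hcov⟩ := h
  set T := S.toFinite.toFinset
  obtain ⟨i, hiq, havoid⟩ := exists_twinScale_avoiding ℓ (q * q)
    ((T ×ˢ T).image fun st => G.nbhdDist st.1 st.2) <| by
      have hT : T.card ≤ q := by rwa [← Set.ncard_eq_toFinset_card]
      exact Finset.card_image_le.trans ((Finset.card_product T T).trans_le
        (Nat.mul_le_mul hT hT))
  set k := twinScale ℓ i
  have hcovk : ∀ v, ∃ s ∈ S, nearTwin G k s v := fun v =>
    (hcov v).imp fun s ⟨hs, hsv⟩ => ⟨hs, hsv.mono (by have := le_twinScale ℓ i; omega)⟩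
  have hgap : ∀ s ∈ S, ∀ t ∈ S,
      G.nbhdDist s t + 2 * ℓ ≤ k ∨ 2 * k + 2 * ℓ < G.nbhdDist s t := fun s hs t ht =>
    havoid (G.nbhdDist s t) (Finset.mem_image.mpr ⟨(s, t), Finset.mem_product.mpr
      ⟨S.toFinite.mem_toFinset.mpr hs, S.toFinite.mem_toFinset.mpr ht⟩, rfl⟩)
  have heq : Equivalence (nearTwin G k) :=
    ⟨nearTwin_refl G k, nearTwin.symm, nearTwin_trans_of_avoiding hcov hgap⟩
  exact ⟨k, twinScale_mono ℓ hiq, heq, (ncard_nearTwin_classes_le heq hcovk).trans hSq⟩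

theorem stmt5 (C : ∀ n : ℕ, Set (SimpleGraph (Fin n))) :
    (∃ k₀ p : ℕ, ∀ n : ℕ, ∀ G ∈ C n, NearUniform G k₀ p) ↔
    (∃ ℓ q : ℕ, ∀ n : ℕ, ∀ G ∈ C n, NearCovered G ℓ q) := by
  constructor
  · rintro ⟨k₀, p, h⟩
    exact ⟨k₀, p, fun n G hG => (h n G hG).nearCovered⟩
  · rintro ⟨ℓ, q, h⟩
    exact ⟨twinScale ℓ (q * q), q, fun n G hG => (h n G hG).nearUniform⟩
end

section
/- For all ℓ, q ∈ ℕ there exist k₀, p ∈ ℕ, depending only on ℓ and q, such that every finite simple graph that is (ℓ,q)-near-covered is (k₀,p)-near-uniform. -/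
/-!
Measure distances between vertices by `|N(u) △ N(v)|`, a pseudometric with values in `ℕ`, and
let `S` be a cover of radius `ℓ` with at most `q` points. Along the thresholds
`a₀ = 0`, `aᵢ₊₁ = 2aᵢ + 4ℓ`, the at most `q²` distances inside `S` must miss one of the
`q² + 1` windows `(aᵢ, aᵢ₊₁]`. For such a window, with `k = 2aᵢ + 2ℓ`, two points at distance
at most `k` have cover points at distance at most `aᵢ₊₁`, hence at most `aᵢ`; two such steps
stay within `ℓ + 2aᵢ + ℓ = k`. So `ρ_k` is transitive and each of its classes is the class
of a point of `S`.
-/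

theorem Equivalence.ncard_classes_le {V : Type*} {r : V → V → Prop} (hr : Equivalence r)
    {S : Set V} (hS : S.Finite) (hcov : ∀ v, ∃ s ∈ S, r s v) :
    {C : Set V | ∃ u, C = {v | r u v}}.ncard ≤ S.ncard := by
  have hsub : {C : Set V | ∃ u, C = {v | r u v}} ⊆ (fun s => {v | r s v}) '' S := by
    rintro C ⟨u, rfl⟩
    obtain ⟨s, hs, hsu⟩ := hcov u
    refine ⟨s, hs, Set.ext fun v => ⟨fun hsv => hr.trans (hr.symm hsu) hsv, hr.trans hsu⟩⟩
  exact (Set.ncard_le_ncard hsub (hS.image _)).trans (Set.ncard_image_le hS)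

theorem exists_forall_notMem_Ioc_of_monotone {f : ℕ → ℕ} (hf : Monotone f) (D : Finset ℕ) :
    ∃ i ≤ D.card, ∀ x ∈ D, x ∉ Set.Ioc (f i) (f (i + 1)) := by
  by_contra! h
  choose! g hgD hgI using h
  have hg : StrictMonoOn g (Set.Iic D.card) := fun i hi j hj hij =>
    ((hgI i hi).2.trans (hf hij)).trans_lt (hgI j hj).1
  have := Finset.card_le_card_of_injOn g (fun i hi => hgD i (Finset.mem_Iic.mp hi))
    (by simpa using hg.injOn)
  simp at this

theorem exists_forall_notMem_Ioc_of_ncard_le {V : Type*} {f : ℕ → ℕ} (hf : Monotone f)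
    (d : V → V → ℕ) {S : Set V} (hS : S.Finite) {q : ℕ} (hSq : S.ncard ≤ q) :
    ∃ i ≤ q * q, ∀ s ∈ S, ∀ s' ∈ S, d s s' ∉ Set.Ioc (f i) (f (i + 1)) := by
  let D := (hS.toFinset ×ˢ hS.toFinset).image fun p => d p.1 p.2
  have hD : D.card ≤ q * q := by
    rw [Set.ncard_eq_toFinset_card S hS] at hSq
    calc D.card ≤ (hS.toFinset ×ˢ hS.toFinset).card := Finset.card_image_le
      _ = hS.toFinset.card * hS.toFinset.card := Finset.card_product _ _
      _ ≤ q * q := Nat.mul_le_mul hSq hSq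
  obtain ⟨i, hi, hgap⟩ := exists_forall_notMem_Ioc_of_monotone hf D
  refine ⟨i, hi.trans hD, fun s hs s' hs' => hgap _ (Finset.mem_image.mpr ⟨(s, s'), ?_, rfl⟩)⟩
  exact Finset.mem_product.mpr ⟨hS.mem_toFinset.mpr hs, hS.mem_toFinset.mpr hs'⟩

theorem le_trans_of_cover_of_gap {V : Type*} {d : V → V → ℕ} {S : Set V} {ℓ a : ℕ}
    (hcomm : ∀ u v, d u v = d v u)
    (htri : ∀ u v w, d u w ≤ d u v + d v w) (hcov : ∀ v, ∃ s ∈ S, d s v ≤ ℓ)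
    (hgap : ∀ s ∈ S, ∀ s' ∈ S, d s s' ∉ Set.Ioc a (2 * a + 4 * ℓ))
    {u v w : V} (huv : d u v ≤ 2 * a + 2 * ℓ) (hvw : d v w ≤ 2 * a + 2 * ℓ) :
    d u w ≤ 2 * a + 2 * ℓ := by
  have hcov' : ∀ x, ∃ s ∈ S, d s x ≤ ℓ ∧ d x s ≤ ℓ := fun x => by
    obtain ⟨s, hs, hsx⟩ := hcov x
    exact ⟨s, hs, hsx, hcomm x s ▸ hsx⟩
  have hcover_close : ∀ x y, d x y ≤ 2 * a + 2 * ℓ → ∀ sx ∈ S, d sx x ≤ ℓ →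
      ∀ sy ∈ S, d y sy ≤ ℓ → d sx sy ≤ a := by
    intro x y hxy sx hsx hsxx sy hsy hysy
    have := htri sx x sy
    have := htri x y sy
    have := hgap sx hsx sy hsy
    simp only [Set.mem_Ioc, not_and, not_le] at this
    omega
  obtain ⟨su, hsu, hsuu, husu⟩ := hcov' u
  obtain ⟨sv, hsv, hsvv, hvsv⟩ := hcov' v
  obtain ⟨sw, hsw, hsww, hwsw⟩ := hcov' w
  have := hcover_close u v huv su hsu hsuu sv hsv hvsv
  have := hcover_close v w hvw sv hsv hsvv sw hsw hwsw
  have := htri u su sw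
  have := htri su sv sw
  have := htri u sw w
  omega

theorem NearUniform.mono {V : Type*} {G : SimpleGraph V} {k₀ k₁ p : ℕ}
    (h : NearUniform G k₀ p) (hk : k₀ ≤ k₁) : NearUniform G k₁ p :=
  let ⟨k, hk₀k, hequiv⟩ := h
  ⟨k, hk₀k.trans hk, hequiv⟩

section NeighborSet

variable {V : Type*} (G : SimpleGraph V)

noncomputable def nbhdDist (u v : V) : ℕ :=
  (symmDiff (G.neighborSet u) (G.neighborSet v)).ncard

theorem nbhdDist_comm (u v : V) : nbhdDist G u v = nbhdDist G v u :=
  congrArg Set.ncard (symmDiff_comm _ _)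

theorem nbhdDist_triangle [Finite V] (u v w : V) :
    nbhdDist G u w ≤ nbhdDist G u v + nbhdDist G v w :=
  (Set.ncard_le_ncard (symmDiff_triangle _ _ _) (Set.toFinite _)).trans (Set.ncard_union_le _ _)

theorem nearUniform_of_cover_of_gap [Finite V] {S : Set V} {ℓ q a : ℕ} (hSq : S.ncard ≤ q)
    (hcov : ∀ v, ∃ s ∈ S, nearTwin G ℓ s v)
    (hgap : ∀ s ∈ S, ∀ s' ∈ S, nbhdDist G s s' ∉ Set.Ioc a (2 * a + 4 * ℓ)) :
    NearUniform G (2 * a + 2 * ℓ) q := by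
  have htrans {u v w : V} : nearTwin G (2 * a + 2 * ℓ) u v → nearTwin G (2 * a + 2 * ℓ) v w →
      nearTwin G (2 * a + 2 * ℓ) u w :=
    le_trans_of_cover_of_gap (nbhdDist_comm G) (nbhdDist_triangle G) hcov hgap
  have hequiv : Equivalence (nearTwin G (2 * a + 2 * ℓ)) :=
    ⟨fun u => by simp [nearTwin], fun {u v} h => (nbhdDist_comm G v u).trans_le h, htrans⟩
  refine ⟨_, le_rfl, hequiv, (hequiv.ncard_classes_le S.toFinite fun v => ?_).trans hSq⟩
  obtain ⟨s, hs, hsv⟩ := hcov v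
  exact ⟨s, hs, hsv.trans (by omega)⟩

end NeighborSet

def gapSeq (ℓ : ℕ) : ℕ → ℕ
  | 0 => 0
  | i + 1 => 2 * gapSeq ℓ i + 4 * ℓ

theorem gapSeq_succ (ℓ i : ℕ) : gapSeq ℓ (i + 1) = 2 * gapSeq ℓ i + 4 * ℓ :=
  rfl

theorem gapSeq_monotone (ℓ : ℕ) : Monotone (gapSeq ℓ) :=
  monotone_nat_of_le_succ fun i => by rw [gapSeq_succ]; omega

theorem stmt6 (ℓ q : ℕ) :
    ∃ k₀ p : ℕ, ∀ (V : Type) [Fintype V] (G : SimpleGraph V),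
      NearCovered G ℓ q → NearUniform G k₀ p := by
  refine ⟨2 * gapSeq ℓ (q * q) + 2 * ℓ, q, fun V _ G ⟨S, hSq, hcov⟩ => ?_⟩
  obtain ⟨i, hi, hgap⟩ :=
    exists_forall_notMem_Ioc_of_ncard_le (gapSeq_monotone ℓ) (nbhdDist G) S.toFinite hSq
  rw [gapSeq_succ] at hgap
  refine (nearUniform_of_cover_of_gap G hSq hcov hgap).mono ?_
  have := gapSeq_monotone ℓ hi
  omega
end

section
/- Let k₀, p ∈ ℕ. There exist a finite set L of unary relation symbols ('labels') and a first-order formula ψ(x,y) with two free variables in the relational language consisting of one binary edge relation symbol together with the unary relation symbols of L, both depending only on k₀ and p, such that: for every finite simple graph H that is (k₀,p)-near-uniform, there exists a structure G_H in that language whose universe is V(H), whose binary relation is (the symmetrization of) the edge relation of a simple graph of maximum degree at most 2·k₀·p on V(H), such that for all distinct u, v ∈ V(H): {u,v} ∈ E(H) if and only if G_H ⊨ ψ(u,v) ∨ ψ(v,u). -/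
open FirstOrder

/-- Relation symbols for the language of labelled graphs: the unary symbols are the
labels from `Λ` and there is a single binary (edge) relation symbol. -/
def labelRels (Λ : Type) : ℕ → Type
  | 1 => Λ
  | 2 => PUnit
  | _ => Empty

/-- The first-order relational language with one binary edge relation symbol and
unary relation symbols given by the label set `Λ`. -/
def labelledGraphLang (Λ : Type) : FirstOrder.Language :=
  ⟨fun _ => Empty, labelRels Λ⟩

/-- The first-order structure on the vertex set of a simple graph `G` in which the binary
relation symbol is interpreted by adjacency in `G` and each unary label symbol `l` is
interpreted by the vertex set `lab l`. -/
def labelledStructure {Λ V : Type} (G : SimpleGraph V) (lab : Λ → Set V) :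
    (labelledGraphLang Λ).Structure V where
  funMap {n} f _ := f.elim
  RelMap {n} :=
    match n with
    | 0 => fun r _ => r.elim
    | 1 => fun l x => x 0 ∈ lab l
    | 2 => fun _ x => G.Adj (x 0) (x 1)
    | (_ + 3) => fun r _ => r.elim

/-- The graph interpreted by the formula `ψ(x,y)` in the labelled graph `(G, lab)`:
distinct vertices `u`, `v` are adjacent iff `ψ(u,v) ∨ ψ(v,u)` holds. -/
def interpGraph {Λ V : Type} (G : SimpleGraph V) (lab : Λ → Set V)
    (ψ : (labelledGraphLang Λ).Formula (Fin 2)) : SimpleGraph V where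
  Adj u v := u ≠ v ∧
    (letI := labelledStructure G lab
     ψ.Realize ![u, v] ∨ ψ.Realize ![v, u])
  symm := by
    refine ⟨?_⟩
    intro u v h
    exact ⟨Ne.symm h.1, h.2.elim Or.inr Or.inl⟩
  loopless := by
    refine ⟨?_⟩
    intro u h
    exact h.1 rfl

/-!
Fix `k ≤ k₀` and a colouring `c : V → Fin p` whose classes consist of pairwise near-`k`-twins.
Between two classes `A`, `B` with more than `T = k₀(k₀+1)² + 4k₀` vertices, the rows and the
columns of the bipartite adjacency matrix pairwise differ in at most `k` places. Such a matrix is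
almost constant: if some row had more than `k` ones and more than `k` zeros, pick `k + 1` of each;
every row has a one among the former and a zero among the latter, so `A` is covered by the
`(k+1)²` sets on which two columns differ, and `#A ≤ k(k+1)²`. Hence every vertex of `A`
disagrees with the majority adjacency between `A` and `B` on at most `2k` vertices of `B`, and
these exceptional pairs form a graph of maximum degree at most `2kp`.

The at most `pT` vertices of small classes receive names. A vertex label records the colour, the
name, the majority bits towards every class and the adjacency to every named vertex; adjacency in
`H` is then a fixed Boolean function of the two labels and the exceptional edge, and this function
is expressed by a quantifier-free formula.
-/

open FirstOrder.Language Finset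

section TruthTable

variable {Λ : Type}

def adjAtom (Λ : Type) : (labelledGraphLang Λ).Formula (Fin 2) :=
  Relations.formula₂ (PUnit.unit : labelRels Λ 2) (Term.var 0) (Term.var 1)

def adjLiteral (Λ : Type) : Bool → (labelledGraphLang Λ).Formula (Fin 2)
  | true => adjAtom Λ
  | false => ∼(adjAtom Λ)

def labelAt (a : Λ) (i : Fin 2) : (labelledGraphLang Λ).Formula (Fin 2) :=
  Relations.formula₁ (a : labelRels Λ 1) (Term.var i)

noncomputable def truthTableFormula [Finite Λ] (f : Λ → Λ → Bool → Bool) :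
    (labelledGraphLang Λ).Formula (Fin 2) :=
  Formula.iSup fun t : {t : Λ × Λ × Bool // f t.1 t.2.1 t.2.2} =>
    labelAt t.1.1 0 ⊓ labelAt t.1.2.1 1 ⊓ adjLiteral Λ t.1.2.2

variable {V : Type} (G : SimpleGraph V)

theorem realize_adjLiteral (lab : Λ → Set V) (e : Bool) (x : Fin 2 → V) :
    (letI := labelledStructure G lab
     (adjLiteral Λ e).Realize x) ↔ (G.Adj (x 0) (x 1) ↔ e) := by
  let := labelledStructure G lab
  cases e <;> simp [adjLiteral, adjAtom] <;> rfl

theorem realize_labelAt (lab : Λ → Set V) (a : Λ) (i : Fin 2) (x : Fin 2 → V) :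
    (letI := labelledStructure G lab
     (labelAt a i).Realize x) ↔ x i ∈ lab a :=
  Iff.rfl

theorem realize_truthTableFormula [Finite Λ] [DecidableRel G.Adj] (tp : V → Λ)
    (f : Λ → Λ → Bool → Bool) (u v : V) :
    (letI := labelledStructure G (fun a => {w | tp w = a})
     (truthTableFormula f).Realize ![u, v]) ↔ f (tp u) (tp v) (G.Adj u v) := by
  let := labelledStructure G (fun a => {w | tp w = a})
  simp only [truthTableFormula, Formula.realize_iSup, Formula.realize_inf, realize_labelAt,
    realize_adjLiteral, Matrix.cons_val_zero, Matrix.cons_val_one, Set.mem_ofPred_eq]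
  constructor
  · rintro ⟨⟨⟨a, b, e⟩, hf⟩, ⟨rfl, rfl⟩, he⟩
    obtain rfl : decide (G.Adj u v) = e := by cases e <;> simpa using he
    exact hf
  · intro hf
    exact ⟨⟨⟨tp u, tp v, G.Adj u v⟩, hf⟩, ⟨rfl, rfl⟩, by simp⟩

end TruthTable

section RowsAndColumns

variable {α β : Type*} {R : α → β → Prop} [∀ a b, Decidable (R a b)]
  {A : Finset α} {B : Finset β} {k : ℕ}

theorem card_le_of_rows_near_of_cols_near {u₀ : α}
    (hrow : ∀ u ∈ A, #{v ∈ B | ¬(R u v ↔ R u₀ v)} ≤ k)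
    (hcol : ∀ v ∈ B, ∀ v' ∈ B, #{u ∈ A | ¬(R u v ↔ R u v')} ≤ k)
    (hpos : k < #{v ∈ B | R u₀ v}) (hneg : k < #{v ∈ B | ¬R u₀ v}) :
    #A ≤ k * (k + 1) ^ 2 := by
  classical
  obtain ⟨X, hXB, hX⟩ := exists_subset_card_eq (n := k + 1) hpos
  obtain ⟨Y, hYB, hY⟩ := exists_subset_card_eq (n := k + 1) hneg
  simp only [subset_iff, mem_filter] at hXB hYB
  -- Row `u` differs from row `u₀` in at most `k` places, so it has a one in `X` and a zero in `Y`.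
  have hcover : A ⊆ (X ×ˢ Y).biUnion fun xy => {u ∈ A | ¬(R u xy.1 ↔ R u xy.2)} := by
    intro u hu
    have hfew : #{v ∈ B | ¬(R u v ↔ R u₀ v)} < k + 1 := Nat.lt_succ_of_le (hrow u hu)
    obtain ⟨x, hxX, hx⟩ := exists_mem_notMem_of_card_lt_card (hfew.trans_eq hX.symm)
    obtain ⟨y, hyY, hy⟩ := exists_mem_notMem_of_card_lt_card (hfew.trans_eq hY.symm)
    obtain ⟨hxB, hx₀⟩ := hXB hxX
    obtain ⟨hyB, hy₀⟩ := hYB hyY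
    simp only [mem_filter, hxB, hyB, true_and, not_not] at hx hy
    simp only [mem_biUnion, mem_product, mem_filter]
    exact ⟨(x, y), ⟨hxX, hyY⟩, hu, by simp only; tauto⟩
  calc #A ≤ #(X ×ˢ Y) * k := (card_le_card hcover).trans <|
        card_biUnion_le_card_mul _ _ _ fun xy hxy =>
          hcol _ (hXB (mem_product.1 hxy).1).1 _ (hYB (mem_product.1 hxy).2).1
    _ = k * (k + 1) ^ 2 := by rw [card_product, hX, hY]; ring

theorem rows_sparse_or_rows_cosparse
    (hrow : ∀ u ∈ A, ∀ u' ∈ A, #{v ∈ B | ¬(R u v ↔ R u' v)} ≤ k)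
    (hcol : ∀ v ∈ B, ∀ v' ∈ B, #{u ∈ A | ¬(R u v ↔ R u v')} ≤ k)
    (hA : k * (k + 1) ^ 2 < #A) :
    (∀ u ∈ A, #{v ∈ B | R u v} ≤ 2 * k) ∨ (∀ u ∈ A, #{v ∈ B | ¬R u v} ≤ 2 * k) := by
  classical
  obtain ⟨u₀, hu₀⟩ : A.Nonempty := card_pos.1 (by omega)
  have hrow₀ : ∀ u ∈ A, #{v ∈ B | ¬(R u v ↔ R u₀ v)} ≤ k := fun u hu => hrow u hu u₀ hu₀
  by_cases hpos : #{v ∈ B | R u₀ v} ≤ k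
  · refine Or.inl fun u hu => ?_
    calc #{v ∈ B | R u v} ≤ #({v ∈ B | R u₀ v} ∪ {v ∈ B | ¬(R u v ↔ R u₀ v)}) :=
          card_le_card fun v => by simp only [mem_filter, mem_union]; tauto
      _ ≤ 2 * k := (card_union_le _ _).trans (by linarith [hrow₀ u hu])
  by_cases hneg : #{v ∈ B | ¬R u₀ v} ≤ k
  · refine Or.inr fun u hu => ?_
    calc #{v ∈ B | ¬R u v} ≤ #({v ∈ B | ¬R u₀ v} ∪ {v ∈ B | ¬(R u v ↔ R u₀ v)}) :=
          card_le_card fun v => by simp only [mem_filter, mem_union]; tauto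
      _ ≤ 2 * k := (card_union_le _ _).trans (by linarith [hrow₀ u hu])
  exact absurd (card_le_of_rows_near_of_cols_near hrow₀ hcol (not_le.1 hpos) (not_le.1 hneg))
    (not_le.2 hA)

end RowsAndColumns

theorem Rel.edgeDensity_le_div {α β : Type*} {r : α → β → Prop} [∀ a, DecidablePred (r a)]
    {s : Finset α} {t : Finset β} {n : ℕ} (h : ∀ a ∈ s, #{b ∈ t | r a b} ≤ n) :
    Rel.edgeDensity r s t ≤ n / #t := by
  classical
  obtain rfl | hs := s.eq_empty_or_nonempty
  · simp only [Rel.edgeDensity_empty_left]; positivity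
  have hcard : #(Rel.interedges r s t) ≤ #s * n := by
    rw [Rel.interedges_eq_biUnion]
    exact card_biUnion_le_card_mul _ _ _ fun a ha => (card_map _).trans_le (h a ha)
  calc Rel.edgeDensity r s t ≤ (#s * n : ℕ) / (#s * #t) :=
        div_le_div_of_nonneg_right (by exact_mod_cast hcard) (by positivity)
    _ = n / #t := by push_cast; exact mul_div_mul_left _ _ (by exact_mod_cast hs.card_pos.ne')

theorem nearTwin.card_filter_not_iff_le {V : Type*} [Finite V] {H : SimpleGraph V}
    [DecidableRel H.Adj] {k : ℕ} {u u' : V} (h : nearTwin H k u u') (s : Finset V) :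
    #{v ∈ s | ¬(H.Adj u v ↔ H.Adj u' v)} ≤ k := by
  rw [← Set.ncard_coe_finset]
  refine (Set.ncard_le_ncard fun v hv => ?_).trans h
  simp only [coe_filter, Set.mem_ofPred_eq] at hv
  simp only [Set.mem_symmDiff, SimpleGraph.mem_neighborSet]
  tauto

theorem NearUniform.exists_coloring {V : Type*} [Finite V] {H : SimpleGraph V} {k₀ p : ℕ}
    (h : NearUniform H k₀ p) :
    ∃ k ≤ k₀, ∃ c : V → Fin p, ∀ u v, c u = c v → nearTwin H k u v := by
  obtain ⟨k, hk, hequiv, hcard⟩ := h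
  set classes := {C : Set V | ∃ u, C = {v | nearTwin H k u v}}
  have hle : Nat.card classes ≤ p := hcard
  refine ⟨k, hk, fun u => Fin.castLE hle (Finite.equivFin classes ⟨_, u, rfl⟩), fun u v huv => ?_⟩
  have hclass : {w | nearTwin H k u w} = {w | nearTwin H k v w} :=
    congrArg Subtype.val ((Finite.equivFin classes).injective (Fin.castLE_injective hle huv))
  change v ∈ {w | nearTwin H k u w}
  exact hclass ▸ hequiv.refl v

section ExceptionGraph

variable {V ι : Type*} [Fintype V] (H : SimpleGraph V) [DecidableRel H.Adj] [DecidableEq ι]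
  (c : V → ι) (T : ℕ)

def colorClass (i : ι) : Finset V := {v | c v = i}

def exceptionGraph : SimpleGraph V where
  Adj u v := u ≠ v ∧ T < #(colorClass c (c u)) ∧ T < #(colorClass c (c v)) ∧
    ¬(H.Adj u v ↔ 1 / 2 < H.edgeDensity (colorClass c (c u)) (colorClass c (c v)))
  symm := ⟨fun _ _ ⟨huv, hu, hv, h⟩ =>
    ⟨huv.symm, hv, hu, by rwa [H.adj_comm, H.edgeDensity_comm]⟩⟩
  loopless := ⟨fun _ h => h.1 rfl⟩

variable {H c T} {k : ℕ}

theorem card_filter_not_adj_iff_half_lt_edgeDensity_le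
    (hc : ∀ u v, c u = c v → nearTwin H k u v) {i j : ι}
    (hi : k * (k + 1) ^ 2 < #(colorClass c i)) (hj : 4 * k < #(colorClass c j))
    {u : V} (hu : c u = i) :
    #{v ∈ colorClass c j | ¬(H.Adj u v ↔ 1 / 2 < H.edgeDensity (colorClass c i) (colorClass c j))}
      ≤ 2 * k := by
  set A := colorClass c i
  set B := colorClass c j
  have huA : u ∈ A := by simp [A, colorClass, hu]
  have hrow : ∀ w ∈ A, ∀ w' ∈ A, #{v ∈ B | ¬(H.Adj w v ↔ H.Adj w' v)} ≤ k := by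
    intro w hw w' hw'
    simp only [A, colorClass, mem_filter, mem_univ, true_and] at hw hw'
    exact (hc w w' (hw.trans hw'.symm)).card_filter_not_iff_le B
  have hcol : ∀ v ∈ B, ∀ v' ∈ B, #{w ∈ A | ¬(H.Adj w v ↔ H.Adj w v')} ≤ k := by
    intro v hv v' hv'
    simp only [B, colorClass, mem_filter, mem_univ, true_and] at hv hv'
    simpa only [H.adj_comm v, H.adj_comm v'] using
      (hc v v' (hv.trans hv'.symm)).card_filter_not_iff_le A
  have hsmall : ((2 * k : ℕ) : ℚ) / #B < 1 / 2 := by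
    have hj' : (4 * k : ℚ) < #B := by exact_mod_cast hj
    rw [div_lt_iff₀ (by linarith)]
    push_cast
    linarith
  rcases rows_sparse_or_rows_cosparse hrow hcol hi with hsparse | hcosparse
  · have hsparse' : ¬(1 / 2 < H.edgeDensity A B) :=
      not_lt.2 ((Rel.edgeDensity_le_div hsparse).trans hsmall.le)
    simpa only [hsparse', iff_false, not_not] using hsparse u huA
  · have hdense : 1 / 2 < H.edgeDensity A B := by
      have hsum := Rel.edgeDensity_add_edgeDensity_compl (r := H.Adj) ⟨u, huA⟩
        (card_pos.1 (by omega) : B.Nonempty)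
      have hcompl := Rel.edgeDensity_le_div hcosparse
      change Rel.edgeDensity H.Adj A B + _ = 1 at hsum
      change 1 / 2 < Rel.edgeDensity H.Adj A B
      linarith
    simpa only [hdense, iff_true] using hcosparse u huA

theorem degree_exceptionGraph_le [Fintype ι] (hc : ∀ u v, c u = c v → nearTwin H k u v)
    (hT : k * (k + 1) ^ 2 + 4 * k ≤ T) (u : V) [DecidableRel (exceptionGraph H c T).Adj] :
    (exceptionGraph H c T).degree u ≤ 2 * k * Fintype.card ι := by
  rw [← SimpleGraph.card_neighborFinset_eq_degree, SimpleGraph.neighborFinset_eq_filter,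
    ← card_univ]
  refine card_le_mul_card_image_of_maps_to (f := c) (fun _ _ => mem_univ _) _ fun j _ => ?_
  by_cases hbig : T < #(colorClass c (c u)) ∧ T < #(colorClass c j)
  · refine le_trans (card_le_card fun v hv => ?_) <|
      card_filter_not_adj_iff_half_lt_edgeDensity_le hc (i := c u) (j := j)
        (by omega) (by omega) rfl
    simp only [mem_filter, mem_univ, true_and] at hv
    obtain ⟨⟨-, -, -, hexc⟩, rfl⟩ := hv
    simpa [colorClass] using hexc
  · refine (card_eq_zero.2 (filter_eq_empty_iff.2 fun v hv hvj => ?_)).trans_le (Nat.zero_le _)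
    simp only [mem_filter, mem_univ, true_and] at hv
    exact hbig ⟨hv.2.1, hvj ▸ hv.2.2.1⟩

end ExceptionGraph

theorem card_filter_card_colorClass_le {V ι : Type*} [Fintype V] [Fintype ι] [DecidableEq ι]
    (c : V → ι) (T : ℕ) : #{v | #(colorClass c (c v)) ≤ T} ≤ T * Fintype.card ι := by
  rw [← card_univ]
  refine card_le_mul_card_image_of_maps_to (f := c) (fun _ _ => mem_univ _) _ fun j _ => ?_
  by_cases hj : #(colorClass c j) ≤ T
  · refine le_trans (card_le_card fun v hv => ?_) hj
    simp only [mem_filter, mem_univ, true_and] at hv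
    simp [colorClass, hv.2]
  · refine (card_eq_zero.2 (filter_eq_empty_iff.2 fun v hv hvj => ?_)).trans_le (Nat.zero_le _)
    simp only [mem_filter, mem_univ, true_and] at hv
    exact hj (hvj ▸ hv)

theorem Finset.exists_partial_injection_fin {α : Type*} (s : Finset α) {N : ℕ} (hN : #s ≤ N) :
    ∃ e : α → Option (Fin N),
      (∀ a, e a = none ↔ a ∉ s) ∧ ∀ a b n, e a = some n → e b = some n → a = b := by
  classical
  refine ⟨fun a => if h : a ∈ s then some (Fin.castLE hN (s.equivFin ⟨a, h⟩)) else none,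
    fun a => by by_cases h : a ∈ s <;> simp [h], fun a b n ha hb => ?_⟩
  simp only at ha hb
  split_ifs at ha hb
  simp only [Option.some.injEq] at ha hb
  exact congrArg Subtype.val (s.equivFin.injective (Fin.castLE_injective hN (ha.trans hb.symm)))

/-- The label of a vertex: its colour; its name, if its colour class is small; for each colour
`j`, whether its class is dense to class `j`; for each name, whether it is adjacent to the vertex
of that name. -/
abbrev VertexLabel (ι : Type) (N : ℕ) : Type := ι × Option (Fin N) × (ι → Bool) × (Fin N → Bool)

def decodeAdj {ι : Type} {N : ℕ} : VertexLabel ι N → VertexLabel ι N → Bool → Bool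
  | (_, some n, _, _), (_, _, _, adjName), _ => adjName n
  | (_, none, _, adjName), (_, some n, _, _), _ => adjName n
  | (_, none, dense, _), (j, none, _, _), e => e ^^ dense j

section Labelling

variable {V ι : Type} [Fintype V] (H : SimpleGraph V) [DecidableRel H.Adj] [DecidableEq ι]
  (c : V → ι) {N : ℕ} (name : V → Option (Fin N))

def vertexLabel (v : V) : VertexLabel ι N :=
  (c v, name v, fun j => decide (1 / 2 < H.edgeDensity (colorClass c (c v)) (colorClass c j)),
    fun n => decide (∃ w, name w = some n ∧ H.Adj v w))

theorem decodeAdj_vertexLabel {T : ℕ} [DecidableRel (exceptionGraph H c T).Adj]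
    (hnone : ∀ v, name v = none ↔ T < #(colorClass c (c v)))
    (hname : ∀ u v n, name u = some n → name v = some n → u = v) {u v : V} (huv : u ≠ v) :
    decodeAdj (vertexLabel H c name u) (vertexLabel H c name v)
      ((exceptionGraph H c T).Adj u v) ↔ H.Adj u v := by
  have hnamed : ∀ x y n, name y = some n → ((∃ w, name w = some n ∧ H.Adj x w) ↔ H.Adj x y) :=
    fun x y n hy => ⟨fun ⟨w, hw, hxw⟩ => hname w y n hw hy ▸ hxw, fun hxy => ⟨y, hy, hxy⟩⟩
  rcases hu : name u with _ | n
  · rcases hv : name v with _ | n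
    · have hexc : (exceptionGraph H c T).Adj u v ↔
          ¬(H.Adj u v ↔ 1 / 2 < H.edgeDensity (colorClass c (c u)) (colorClass c (c v))) := by
        simp [exceptionGraph, huv, (hnone u).1 hu, (hnone v).1 hv]
      simp only [decodeAdj, vertexLabel, hu, hv, hexc]
      by_cases hadj : H.Adj u v <;>
        by_cases hdense : 1 / 2 < H.edgeDensity (colorClass c (c u)) (colorClass c (c v)) <;>
        simp [hadj, hdense, -one_div]
    · simp [decodeAdj, vertexLabel, hu, hv, hnamed u v n hv]
  · simp [decodeAdj, vertexLabel, hu, hnamed v u n hu, H.adj_comm]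

end Labelling

theorem stmt12 (k₀ p : ℕ) :
    ∃ (Λ : Type) (_ : Finite Λ) (ψ : (labelledGraphLang Λ).Formula (Fin 2)),
      ∀ (V : Type) [Fintype V] (H : SimpleGraph V), NearUniform H k₀ p →
        ∃ (G' : SimpleGraph V) (lab : Λ → Set V),
          (∀ v : V, (G'.neighborSet v).ncard ≤ 2 * k₀ * p) ∧
          ∀ u v : V, u ≠ v →
            (H.Adj u v ↔
              (letI := labelledStructure G' lab
               ψ.Realize ![u, v] ∨ ψ.Realize ![v, u])) := by
  classical
  set T := k₀ * (k₀ + 1) ^ 2 + 4 * k₀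
  refine ⟨VertexLabel (Fin p) (p * T), inferInstance, truthTableFormula decodeAdj, ?_⟩
  intro V _ H hH
  obtain ⟨k, hk, c, hc⟩ := hH.exists_coloring
  have hT : k * (k + 1) ^ 2 + 4 * k ≤ T := by simp only [T]; gcongr
  obtain ⟨name, hnone, hname⟩ := exists_partial_injection_fin _
    ((card_filter_card_colorClass_le c T).trans_eq (by rw [Fintype.card_fin, mul_comm]))
  have hnone' : ∀ v, name v = none ↔ T < #(colorClass c (c v)) := by simpa using hnone
  refine ⟨exceptionGraph H c T, fun a => {v | vertexLabel H c name v = a}, fun v => ?_,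
    fun u v huv => ?_⟩
  · rw [← Nat.card_coe_set_eq, Nat.card_eq_fintype_card, SimpleGraph.card_neighborSet_eq_degree]
    calc _ ≤ 2 * k * p := by simpa using degree_exceptionGraph_le hc hT v
      _ ≤ 2 * k₀ * p := by gcongr
  · rw [realize_truthTableFormula, realize_truthTableFormula,
      decodeAdj_vertexLabel H c name hnone' hname huv,
      decodeAdj_vertexLabel H c name hnone' hname huv.symm, H.adj_comm v u, or_self]
end

section
/- Let k₀, p ∈ ℕ and let ψ(x,y) be a first-order formula with two free variables in the language of graphs (one binary edge relation symbol, no labels). Then there exist ℓ, q ∈ ℕ, depending only on k₀, p and ψ, such that for every finite simple graph G that is (k₀,p)-near-uniform, the interpreted graph I_ψ(G) — the simple graph on V(G) with edges {u,v} for distinct u, v such that G ⊨ ψ(u,v) ∨ ψ(v,u) — is (ℓ,q)-near-covered. -/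
open FirstOrder

/-- The graph interpreted by the formula `ψ(x,y)` (in the language of graphs) in `G`:
distinct vertices `u`, `v` are adjacent iff `ψ(u,v) ∨ ψ(v,u)` holds in `G` viewed as a
first-order structure. -/
def interpGraphPlain {V : Type} (G : SimpleGraph V)
    (ψ : Language.graph.Formula (Fin 2)) : SimpleGraph V where
  Adj u v := u ≠ v ∧
    (letI := G.structure
     ψ.Realize ![u, v] ∨ ψ.Realize ![v, u])
  symm := by
    constructor
    intro u v h
    exact ⟨Ne.symm h.1, h.2.elim Or.inr Or.inl⟩
  loopless := by
    constructor
    intro u h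
    exact h.1 rfl

/-!
Fix `k ≤ k₀` witnessing near-uniformity and call a vertex exceptional when its near-twin class
has at most `6k + 1` elements; there are at most `p(6k + 1)` exceptional vertices. Between two
twin classes adjacency follows the majority: the rows and the columns of the adjacency matrix of
two classes are pairwise near-twins, and double counting shows that a vertex of a large class
deviates from the majority at no more than `3k` vertices of each class. So the deviation graph
`D` has degree at most `3kp`, and `G` is recovered from `D`, the twin classes and the adjacency
to the exceptional vertices.

A back-and-forth argument in this structure shows that whether `ψ(u, w)` holds depends only on
the isomorphism type of the `D`-ball of radius `r(ψ)` around `u`, as long as `w` lies outside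
it; the radius triples with each quantifier, and finiteness of `G` supplies fresh partners by
counting. These balls have at most `(3kp + 1)^r(ψ)` vertices, so there are boundedly many
types, and two vertices of the same type are near-twins in the interpreted graph since their
neighbourhoods there differ only inside the two balls. The exceptional vertices together with
one vertex of each type form the cover.
-/

open FirstOrder Language Finset

lemma nearTwin_self {V : Type*} (G : SimpleGraph V) (k : ℕ) (v : V) : nearTwin G k v v := by
  simp [nearTwin]

lemma Finset.exists_fin_getElem?_toList_eq {α : Type*} {s : Finset α} {n : ℕ} (hs : #s ≤ n)
    {a : α} (ha : a ∈ s) : ∃ i : Fin n, s.toList[i.1]? = some a := by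
  obtain ⟨i, hi⟩ := List.mem_iff_getElem?.mp (Finset.mem_toList.mpr ha)
  have := (List.getElem?_eq_some_iff.mp hi).1
  exact ⟨⟨i, by simp at this; omega⟩, hi⟩

lemma List.Nodup.eq_iff_of_getElem?_eq_some {α : Type*} {l : List α} (hl : l.Nodup) {i j : ℕ}
    {a b : α} (ha : l[i]? = some a) (hb : l[j]? = some b) : a = b ↔ i = j := by
  refine ⟨fun hab => ?_, fun hij => Option.some.inj (ha.symm.trans (hij ▸ hb))⟩
  subst hab
  exact (List.getElem?_inj (List.getElem?_eq_some_iff.mp ha).1 hl).mp (ha.trans hb.symm)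

lemma exists_ncard_le_forall_exists_eq {V β : Type*} [Fintype β] (F : V → β) :
    ∃ S : Set V, S.ncard ≤ Fintype.card β ∧ ∀ v, ∃ s ∈ S, F s = F v := by
  let σ : Set.range F → V := fun b => b.2.choose
  refine ⟨Set.range σ, ?_, fun v =>
    ⟨σ ⟨F v, v, rfl⟩, ⟨_, rfl⟩, (⟨F v, v, rfl⟩ : Set.range F).2.choose_spec⟩⟩
  calc (Set.range σ).ncard = Nat.card (Set.range σ) := (Nat.card_coe_set_eq _).symm
    _ ≤ Nat.card (Set.range F) := Finite.card_range_le σ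
    _ ≤ Nat.card β := Finite.card_le_of_embedding (Function.Embedding.subtype _)
    _ = Fintype.card β := Nat.card_eq_fintype_card

namespace FirstOrder.Language

def BoundedFormula.quantifierDepth {L : Language} {α : Type*} :
    ∀ {n : ℕ}, L.BoundedFormula α n → ℕ
  | _, .falsum => 0
  | _, .equal _ _ => 0
  | _, .rel _ _ => 0
  | _, .imp φ ψ => max φ.quantifierDepth ψ.quantifierDepth
  | _, .all φ => φ.quantifierDepth + 1

lemma Term.exists_eq_var_of_graph {β : Type*} (t : Language.graph.Term β) : ∃ i, t = var i := by
  cases t with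
  | var i => exact ⟨i, rfl⟩
  | func f _ => exact f.elim

end FirstOrder.Language

def snocIndex {α : Type*} {n : ℕ} : α ⊕ Fin (n + 1) → Option (α ⊕ Fin n) :=
  Sum.elim (some ∘ Sum.inl) (Fin.lastCases none (some ∘ Sum.inr))

lemma option_elim_comp_snocIndex {α β : Type*} {n : ℕ} (v : α → β) (xs : Fin n → β) (a : β) :
    (fun o : Option (α ⊕ Fin n) => o.elim a (Sum.elim v xs)) ∘ snocIndex =
      Sum.elim v (Fin.snoc xs a) := by
  ext (i | i)
  · rfl
  · induction i using Fin.lastCases <;> simp [snocIndex]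

/-! ### Matrices with near-twin rows and columns -/

section MajorityMatrix

variable {ι κ : Type*} (I : Finset ι) (J : Finset κ) (e : ι → κ → Prop) [∀ i j, Decidable (e i j)]
  (t : ℕ)

lemma exists_mul_card_filter_not_le {R : Finset κ} (hR : R.Nonempty)
    (hrow : ∀ i ∈ I, #{j ∈ R | ¬e i j} ≤ t) :
    ∃ j ∈ R, #R * #{i ∈ I | ¬e i j} ≤ t * #I := by
  apply exists_le_of_sum_le hR
  calc ∑ j ∈ R, #R * #{i ∈ I | ¬e i j} = #R * ∑ i ∈ I, #{j ∈ R | ¬e i j} := by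
        simp only [← mul_sum, card_filter]
        rw [sum_comm]
    _ ≤ #R * (#I * t) := by
        gcongr
        simpa using sum_le_card_nsmul I _ t hrow
    _ = ∑ _j ∈ R, t * #I := by rw [sum_const, smul_eq_mul, mul_comm t]

lemma card_le_card_filter_add_of_close {j j₀ : κ}
    (hclose : #{i ∈ I | ¬(e i j ↔ e i j₀)} ≤ t) :
    #I ≤ #{i ∈ I | e i j} + t + #{i ∈ I | ¬e i j₀} := by
  classical
  have hsub : {i ∈ I | e i j₀} ⊆ {i ∈ I | e i j} ∪ {i ∈ I | ¬(e i j ↔ e i j₀)} := by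
    intro i
    simp only [mem_filter, mem_union]
    tauto
  have := card_filter_add_card_filter_not (s := I) (fun i => e i j₀)
  have := (card_le_card hsub).trans (card_union_le _ _)
  omega

lemma card_filter_product_eq_sum :
    #{q ∈ I ×ˢ J | e q.1 q.2} = ∑ j ∈ J, #{i ∈ I | e i j} := by
  simp only [card_filter, sum_product]
  exact sum_comm

theorem card_filter_row_le_of_two_mul_le
    (hrow : ∀ i ∈ I, ∀ i' ∈ I, #{j ∈ J | ¬(e i j ↔ e i' j)} ≤ t)
    (hcol : ∀ j ∈ J, ∀ j' ∈ J, #{i ∈ I | ¬(e i j ↔ e i j')} ≤ t)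
    (hmaj : 2 * #{q ∈ I ×ˢ J | e q.1 q.2} ≤ #I * #J) (hI : 6 * t + 2 ≤ #I)
    {i₀ : ι} (hi₀ : i₀ ∈ I) : #{j ∈ J | e i₀ j} ≤ 3 * t := by
  by_contra! hR
  set R := {j ∈ J | e i₀ j}
  -- every row is close to row `i₀`, so averaging over `R` finds a column `j₀ ∈ R` with few
  -- false entries
  obtain ⟨j₀, hj₀, hz⟩ : ∃ j₀ ∈ R, #R * #{i ∈ I | ¬e i j₀} ≤ t * #I := by
    refine exists_mul_card_filter_not_le I e t (card_pos.mp (by omega)) fun i hi => ?_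
    refine (card_le_card fun j hj => ?_).trans (hrow i₀ hi₀ i hi)
    simp only [R, mem_filter] at hj ⊢
    tauto
  have hj₀J : j₀ ∈ J := (mem_filter.mp hj₀).1
  set z := #{i ∈ I | ¬e i j₀}
  -- every column is close to column `j₀`, so has at least `#I - t - z` true entries
  have htot : #I * #J ≤ #{q ∈ I ×ˢ J | e q.1 q.2} + #J * (t + z) := by
    calc #I * #J = ∑ _j ∈ J, #I := by rw [sum_const, smul_eq_mul, mul_comm]
      _ ≤ ∑ j ∈ J, (#{i ∈ I | e i j} + (t + z)) := sum_le_sum fun j hj => by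
          have := card_le_card_filter_add_of_close I e t (hcol j hj j₀ hj₀J)
          omega
      _ = _ := by rw [sum_add_distrib, sum_const, smul_eq_mul, card_filter_product_eq_sum]
  have hJ : 0 < #J := card_pos.mpr ⟨j₀, hj₀J⟩
  have hIz : #I ≤ 2 * (t + z) := by nlinarith
  nlinarith [Nat.mul_le_mul_right z (show 3 * t + 1 ≤ #R by omega)]

theorem card_filter_not_iff_majority_le
    (hrow : ∀ i ∈ I, ∀ i' ∈ I, #{j ∈ J | ¬(e i j ↔ e i' j)} ≤ t)
    (hcol : ∀ j ∈ J, ∀ j' ∈ J, #{i ∈ I | ¬(e i j ↔ e i j')} ≤ t)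
    (hI : 6 * t + 2 ≤ #I) {i : ι} (hi : i ∈ I) :
    #{j ∈ J | ¬(e i j ↔ #I * #J < 2 * #{q ∈ I ×ˢ J | e q.1 q.2})} ≤ 3 * t := by
  by_cases hm : #I * #J < 2 * #{q ∈ I ×ˢ J | e q.1 q.2}
  · have hcompl := card_filter_add_card_filter_not (s := I ×ˢ J) (fun q => e q.1 q.2)
    rw [card_product] at hcompl
    have := card_filter_row_le_of_two_mul_le I J (fun i j => ¬e i j) t
      (fun i hi i' hi' => by simpa only [not_iff_not] using hrow i hi i' hi')
      (fun j hj j' hj' => by simpa only [not_iff_not] using hcol j hj j' hj') (by omega) hI hi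
    simpa only [hm, iff_true] using this
  · have := card_filter_row_le_of_two_mul_le I J e t hrow hcol (by omega) hI hi
    simpa only [hm, iff_false, not_not] using this

end MajorityMatrix

open scoped Classical

/-! ### Neighbourhoods in a graph -/

namespace SimpleGraph

variable {V : Type*} [Fintype V] {G : SimpleGraph V} {r s : ℕ} {a b v w z : V}

variable (G) in
noncomputable def nbhd (r : ℕ) (a : V) : Finset V := {v | G.edist a v ≤ r}

@[simp] lemma mem_nbhd : v ∈ G.nbhd r a ↔ G.edist a v ≤ r := by simp [nbhd]

lemma mem_nbhd_self (r : ℕ) (a : V) : a ∈ G.nbhd r a := by simp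

lemma nbhd_mono (h : r ≤ s) (a : V) : G.nbhd r a ⊆ G.nbhd s a := fun v hv =>
  mem_nbhd.mpr <| (mem_nbhd.mp hv).trans (by exact_mod_cast h)

lemma mem_nbhd_comm : v ∈ G.nbhd r a ↔ a ∈ G.nbhd r v := by simp [edist_comm]

lemma mem_nbhd_add (hv : v ∈ G.nbhd r a) (hw : w ∈ G.nbhd s v) : w ∈ G.nbhd (r + s) a := by
  rw [mem_nbhd] at *
  push_cast
  exact G.edist_triangle.trans (add_le_add hv hw)

lemma coe_nbhd_subset_of_mem {t : ℕ} {S : Set V} (hv : v ∈ G.nbhd r a) (hS : ↑(G.nbhd t a) ⊆ S)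
    (h : r + s ≤ t) : ↑(G.nbhd s v) ⊆ S := fun _ hw => hS (nbhd_mono h a (mem_nbhd_add hv hw))

lemma mem_nbhd_one_of_adj (h : G.Adj a v) : v ∈ G.nbhd 1 a := by
  simp [edist_eq_one_iff_adj.mpr h]

lemma mem_nbhd_succ (h : v ∈ G.nbhd (r + 1) a) :
    v ∈ G.nbhd r a ∨ ∃ z ∈ G.nbhd r a, G.Adj z v := by
  have hreach : G.Reachable v a := by
    rw [← edist_ne_top_iff_reachable, edist_comm]
    exact ne_top_of_le_ne_top (by simp) (mem_nbhd.mp h)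
  obtain ⟨p, hp⟩ := hreach.exists_walk_length_eq_edist
  rw [mem_nbhd, edist_comm, ← hp] at h
  cases p with
  | nil => exact Or.inl (mem_nbhd_self r _)
  | cons hadj q =>
    refine Or.inr ⟨_, ?_, hadj.symm⟩
    have hq : q.length + 1 ≤ r + 1 := by exact_mod_cast h
    rw [mem_nbhd, edist_comm]
    exact (edist_le q).trans (by exact_mod_cast Nat.le_of_succ_le_succ hq)

lemma one_lt_edist_of_not_mem_nbhd {t : ℕ} (hz : z ∈ G.nbhd r a) (hw : w ∈ G.nbhd s b)
    (hab : b ∉ G.nbhd t a) (ht : r + 1 + s ≤ t) : 1 < G.edist z w := by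
  by_contra! h
  exact hab <| nbhd_mono ht a <|
    mem_nbhd_add (mem_nbhd_add hz (mem_nbhd.mpr (by exact_mod_cast h))) (mem_nbhd_comm.mp hw)

lemma card_nbhd_le {d : ℕ} (hdeg : ∀ v, G.degree v ≤ d) (r : ℕ) (a : V) :
    #(G.nbhd r a) ≤ (d + 1) ^ r := by
  induction r with
  | zero => simp [nbhd, edist_eq_zero_iff, Finset.filter_eq]
  | succ r ih =>
    have hsub : G.nbhd (r + 1) a ⊆ (G.nbhd r a).biUnion fun z => insert z (G.neighborFinset z) := by
      intro v hv
      rcases mem_nbhd_succ hv with hv | ⟨z, hz, hzv⟩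
      · exact mem_biUnion.mpr ⟨v, hv, mem_insert_self _ _⟩
      · exact mem_biUnion.mpr ⟨z, hz, mem_insert_of_mem (by simpa using hzv)⟩
    calc #(G.nbhd (r + 1) a) ≤ #(G.nbhd r a) * (d + 1) :=
          (card_le_card hsub).trans <| card_biUnion_le_card_mul _ _ _ fun z _ =>
            (card_insert_le _ _).trans (by simpa using hdeg z)
      _ ≤ (d + 1) ^ (r + 1) := by rw [pow_succ]; gcongr

end SimpleGraph

/-! ### Presentations and partial isomorphisms -/

/-- Away from the exceptional set `X`, adjacency in `G` is compared with a symmetric pattern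
`pat` on colours; the pairs where the two disagree are the edges of `Presentation.dev`. -/
structure Presentation {V : Type*} (G : SimpleGraph V) (C : Type*) where
  X : Set V
  col : V → C
  pat : C → C → Prop
  pat_comm : ∀ c d, pat c d ↔ pat d c

namespace Presentation

open SimpleGraph

variable {V : Type*} {G : SimpleGraph V} {C : Type*} (P : Presentation G C)

def dev : SimpleGraph V where
  Adj u v := u ≠ v ∧ u ∉ P.X ∧ v ∉ P.X ∧ ¬(G.Adj u v ↔ P.pat (P.col u) (P.col v))
  symm := ⟨fun _ _ ⟨h, hu, hv, hd⟩ => ⟨h.symm, hv, hu, by rwa [G.adj_comm, P.pat_comm]⟩⟩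
  loopless := ⟨fun _ h => h.1 rfl⟩

variable {P} {H H' : SetRel V V} {r s : ℕ} {a b u v w z u' v' : V}

lemma dev_adj : P.dev.Adj u v ↔
    u ≠ v ∧ u ∉ P.X ∧ v ∉ P.X ∧ ¬(G.Adj u v ↔ P.pat (P.col u) (P.col v)) := Iff.rfl

lemma not_mem_of_mem_nbhd [Fintype V] (ha : a ∉ P.X) (hv : v ∈ P.dev.nbhd r a) : v ∉ P.X := by
  induction r generalizing v with
  | zero =>
    obtain rfl : a = v := by simpa [edist_eq_zero_iff] using hv
    exact ha
  | succ r ih =>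
    rcases mem_nbhd_succ hv with hv | ⟨z, -, hzv⟩
    exacts [ih hv, hzv.symm.2.1]

lemma adj_iff_adj_of_col_eq (hu : u ∉ P.X) (hv : v ∉ P.X) (hu' : u' ∉ P.X) (hv' : v' ∉ P.X)
    (huv : u ≠ v) (huv' : u' ≠ v') (hcu : P.col u = P.col u') (hcv : P.col v = P.col v')
    (hdev : P.dev.Adj u v ↔ P.dev.Adj u' v') : G.Adj u v ↔ G.Adj u' v' := by
  simp only [dev_adj, ne_eq, huv, huv', hu, hv, hu', hv', not_false_eq_true, true_and, hcu,
    hcv] at hdev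
  tauto

variable (P) in
structure IsPartialIso (H : SetRel V V) : Prop where
  left_not_mem : ∀ ⦃z w⦄, (z, w) ∈ H → z ∉ P.X
  right_not_mem : ∀ ⦃z w⦄, (z, w) ∈ H → w ∉ P.X
  col_eq : ∀ ⦃z w⦄, (z, w) ∈ H → P.col z = P.col w
  adj_iff_of_mem : ∀ ⦃z w x⦄, (z, w) ∈ H → x ∈ P.X → (G.Adj z x ↔ G.Adj w x)
  eq_iff : ∀ ⦃z w z' w'⦄, (z, w) ∈ H → (z', w') ∈ H → (z = z' ↔ w = w')
  dev_iff : ∀ ⦃z w z' w'⦄, (z, w) ∈ H → (z', w') ∈ H → (P.dev.Adj z z' ↔ P.dev.Adj w w')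

namespace IsPartialIso

lemma mono (hH : P.IsPartialIso H) (h : H' ⊆ H) : P.IsPartialIso H' where
  left_not_mem _ _ hzw := hH.left_not_mem (h hzw)
  right_not_mem _ _ hzw := hH.right_not_mem (h hzw)
  col_eq _ _ hzw := hH.col_eq (h hzw)
  adj_iff_of_mem _ _ _ hzw := hH.adj_iff_of_mem (h hzw)
  eq_iff _ _ _ _ hzw hzw' := hH.eq_iff (h hzw) (h hzw')
  dev_iff _ _ _ _ hzw hzw' := hH.dev_iff (h hzw) (h hzw')

lemma inv (hH : P.IsPartialIso H) : P.IsPartialIso H.inv where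
  left_not_mem _ _ hzw := hH.right_not_mem hzw
  right_not_mem _ _ hzw := hH.left_not_mem hzw
  col_eq _ _ hzw := (hH.col_eq hzw).symm
  adj_iff_of_mem _ _ _ hzw hx := (hH.adj_iff_of_mem hzw hx).symm
  eq_iff _ _ _ _ hzw hzw' := (hH.eq_iff hzw hzw').symm
  dev_iff _ _ _ _ hzw hzw' := (hH.dev_iff hzw hzw').symm

lemma comp (hH : P.IsPartialIso H) (hH' : P.IsPartialIso H') : P.IsPartialIso (H.comp H') where
  left_not_mem _ _ := fun ⟨_, h, _⟩ => hH.left_not_mem h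
  right_not_mem _ _ := fun ⟨_, _, h'⟩ => hH'.right_not_mem h'
  col_eq _ _ := fun ⟨_, h, h'⟩ => (hH.col_eq h).trans (hH'.col_eq h')
  adj_iff_of_mem _ _ _ := fun ⟨_, h, h'⟩ hx =>
    (hH.adj_iff_of_mem h hx).trans (hH'.adj_iff_of_mem h' hx)
  eq_iff _ _ _ _ := fun ⟨_, h₁, h₁'⟩ ⟨_, h₂, h₂'⟩ =>
    (hH.eq_iff h₁ h₂).trans (hH'.eq_iff h₁' h₂')
  dev_iff _ _ _ _ := fun ⟨_, h₁, h₁'⟩ ⟨_, h₂, h₂'⟩ =>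
    (hH.dev_iff h₁ h₂).trans (hH'.dev_iff h₁' h₂')

lemma union (hH : P.IsPartialIso H) (hH' : P.IsPartialIso H')
    (hfar : ∀ ⦃z w z' w'⦄, (z, w) ∈ H → (z', w') ∈ H' →
      1 < P.dev.edist z z' ∧ 1 < P.dev.edist w w') :
    P.IsPartialIso (H ∪ H') := by
  have hne {x y : V} (h : 1 < P.dev.edist x y) : x ≠ y ∧ ¬P.dev.Adj x y := by
    refine ⟨fun hxy => ?_, fun hxy => ?_⟩
    · simp [hxy] at h
    · simp [edist_eq_one_iff_adj.mpr hxy] at h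
  have hcross {z w z' w'} (h : (z, w) ∈ H) (h' : (z', w') ∈ H') :
      ((z = z' ↔ w = w') ∧ (P.dev.Adj z z' ↔ P.dev.Adj w w')) ∧
        ((z' = z ↔ w' = w) ∧ (P.dev.Adj z' z ↔ P.dev.Adj w' w)) := by
    obtain ⟨⟨hz, hdz⟩, ⟨hw, hdw⟩⟩ := And.imp hne hne (hfar h h')
    simp only [hz, hw, hdz, hdw, Ne.symm hz, Ne.symm hw, P.dev.adj_comm z', P.dev.adj_comm w']
    tauto
  refine ⟨?_, ?_, ?_, ?_, ?_, ?_⟩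
  · rintro _ _ (h | h)
    exacts [hH.left_not_mem h, hH'.left_not_mem h]
  · rintro _ _ (h | h)
    exacts [hH.right_not_mem h, hH'.right_not_mem h]
  · rintro _ _ (h | h)
    exacts [hH.col_eq h, hH'.col_eq h]
  · rintro _ _ _ (h | h)
    exacts [hH.adj_iff_of_mem h, hH'.adj_iff_of_mem h]
  · rintro _ _ _ _ (h | h) (h' | h')
    exacts [hH.eq_iff h h', (hcross h h').1.1, (hcross h' h).2.1, hH'.eq_iff h h']
  · rintro _ _ _ _ (h | h) (h' | h')
    exacts [hH.dev_iff h h', (hcross h h').1.2, (hcross h' h).2.2, hH'.dev_iff h h']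

lemma adj_iff (hH : P.IsPartialIso H) (h : (z, w) ∈ H) (h' : (z', w') ∈ H) :
    G.Adj z z' ↔ G.Adj w w' := by
  by_cases hzz : z = z'
  · obtain rfl := hzz
    obtain rfl := (hH.eq_iff h h').mp rfl
    simp
  exact adj_iff_adj_of_col_eq (hH.left_not_mem h) (hH.left_not_mem h') (hH.right_not_mem h)
    (hH.right_not_mem h') hzz (fun hww => hzz ((hH.eq_iff h h').mpr hww)) (hH.col_eq h)
    (hH.col_eq h') (hH.dev_iff h h')

lemma mem_nbhd_of_mem [Fintype V] (hH : P.IsPartialIso H) (hab : (a, b) ∈ H)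
    (hdom : ↑(P.dev.nbhd r a) ⊆ H.dom) (hzw : (z, w) ∈ H) (hz : z ∈ P.dev.nbhd r a) :
    w ∈ P.dev.nbhd r b := by
  suffices ∀ s ≤ r, ∀ ⦃z w⦄, (z, w) ∈ H → z ∈ P.dev.nbhd s a → w ∈ P.dev.nbhd s b from
    this r le_rfl hzw hz
  intro s
  induction s with
  | zero =>
    intro _ z w hzw hz
    obtain rfl : a = z := by simpa [edist_eq_zero_iff] using hz
    obtain rfl := (hH.eq_iff hab hzw).mp rfl
    exact mem_nbhd_self 0 _
  | succ s ih =>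
    intro hs z w hzw hz
    rcases mem_nbhd_succ hz with hz | ⟨y, hy, hyz⟩
    · exact nbhd_mono (Nat.le_succ s) b (ih (by omega) hzw hz)
    · obtain ⟨x, hyx⟩ := hdom (nbhd_mono (by omega) a hy)
      refine mem_nbhd_add (ih (by omega) hyx hy) ?_
      exact mem_nbhd_one_of_adj ((hH.dev_iff hyx hzw).mp hyz)

end IsPartialIso

variable (P) in
def Untouched (H : SetRel V V) (a : V) : Prop := a ∈ P.X ∨ (a ∉ H.dom ∧ a ∉ H.cod)

lemma Untouched.mono (h : P.Untouched H a) (hH : H' ⊆ H) : P.Untouched H' a :=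
  h.imp_right fun ⟨hd, hc⟩ => ⟨fun h' => hd (SetRel.dom_mono hH h'),
    fun h' => hc (SetRel.cod_mono hH h')⟩

lemma Untouched.inv (h : P.Untouched H a) : P.Untouched H.inv a := h.imp_right And.symm

lemma Untouched.union (h : P.Untouched H a) (h' : P.Untouched H' a) :
    P.Untouched (H ∪ H') a := by
  rcases h with hX | ⟨hd, hc⟩
  · exact Or.inl hX
  rcases h' with hX | ⟨hd', hc'⟩
  · exact Or.inl hX
  refine Or.inr ⟨?_, ?_⟩
  · rintro ⟨w, hw | hw⟩
    exacts [hd ⟨w, hw⟩, hd' ⟨w, hw⟩]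
  · rintro ⟨z, hz | hz⟩
    exacts [hc ⟨z, hz⟩, hc' ⟨z, hz⟩]

variable [Fintype V]

variable (P) in
def Matched (H : SetRel V V) (r : ℕ) (a b : V) : Prop :=
  (a, b) ∈ H ∧ ↑(P.dev.nbhd r a) ⊆ H.dom ∧ ↑(P.dev.nbhd r b) ⊆ H.cod

variable (P) in
def Corresponds (H : SetRel V V) (r : ℕ) (a b : V) : Prop :=
  P.Matched H r a b ∨ (a = b ∧ P.Untouched H a)

variable (P) in
/-- A position of the back-and-forth game: each pair `(f i, g i)` is matched by the partial
isomorphism `H` together with its `r`-neighbourhoods, or is a single vertex that is exceptional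
or untouched by `H`. -/
def LocallyEquiv {ι : Type*} (r : ℕ) (f g : ι → V) : Prop :=
  ∃ H, P.IsPartialIso H ∧ ∀ i, P.Corresponds H r (f i) (g i)

variable (P) in
def BallIso (r : ℕ) (a b : V) : Prop :=
  ∃ H, P.IsPartialIso H ∧ (a, b) ∈ H ∧ H.dom = P.dev.nbhd r a ∧ H.cod = P.dev.nbhd r b

lemma Matched.mono (h : P.Matched H r a b) (hH : H ⊆ H') : P.Matched H' r a b :=
  ⟨hH h.1, h.2.1.trans (SetRel.dom_mono hH), h.2.2.trans (SetRel.cod_mono hH)⟩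

lemma Matched.of_le (h : P.Matched H s a b) (hrs : r ≤ s) : P.Matched H r a b :=
  ⟨h.1, subset_trans (by simpa using nbhd_mono hrs a) h.2.1,
    subset_trans (by simpa using nbhd_mono hrs b) h.2.2⟩

lemma Matched.inv (h : P.Matched H r a b) : P.Matched H.inv r b a := ⟨h.1, h.2.2, h.2.1⟩

lemma Matched.mem_nbhd_of_mem (hH : P.IsPartialIso H) (h : P.Matched H r a b)
    (hzw : (z, w) ∈ H) (hz : z ∈ P.dev.nbhd r a) : w ∈ P.dev.nbhd r b :=
  hH.mem_nbhd_of_mem h.1 h.2.1 hzw hz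

lemma Matched.restrict (hH : P.IsPartialIso H) (h : P.Matched H r a b) {S : Set V}
    (hS : ↑(P.dev.nbhd r a) ⊆ S) : P.Matched (H ∩ Prod.fst ⁻¹' S) r a b := by
  refine ⟨⟨h.1, hS (by simp)⟩, fun z hz => ?_, fun w hw => ?_⟩
  · obtain ⟨w, hzw⟩ := h.2.1 hz
    exact ⟨w, hzw, hS hz⟩
  · obtain ⟨z, hzw⟩ := h.2.2 hw
    exact ⟨z, hzw, hS (by simpa using h.inv.mem_nbhd_of_mem hH.inv hzw hw)⟩

lemma Matched.matched_of_mem_nbhd (hH : P.IsPartialIso H) (h : P.Matched H (3 * r + 1) a b)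
    (hzw : (z, w) ∈ H) (hz : z ∈ P.dev.nbhd (2 * r + 1) a) :
    w ∈ P.dev.nbhd (2 * r + 1) b ∧ P.Matched H r z w := by
  have hw := (h.of_le (by omega)).mem_nbhd_of_mem hH hzw hz
  exact ⟨hw, hzw, coe_nbhd_subset_of_mem hz h.2.1 (by omega),
    coe_nbhd_subset_of_mem hw h.2.2 (by omega)⟩

lemma Matched.ballIso (hH : P.IsPartialIso H) (h : P.Matched H r a b) : P.BallIso r a b := by
  have h' := h.restrict hH subset_rfl
  refine ⟨_, hH.mono Set.inter_subset_left, h'.1, subset_antisymm ?_ h'.2.1,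
    subset_antisymm ?_ h'.2.2⟩
  · rintro z ⟨w, -, hz⟩
    exact hz
  · rintro w ⟨z, hzw, hz⟩
    simpa using h.mem_nbhd_of_mem hH hzw hz

lemma BallIso.matched (h : P.BallIso r a b) : ∃ H, P.IsPartialIso H ∧ P.Matched H r a b ∧
    H.dom = P.dev.nbhd r a ∧ H.cod = P.dev.nbhd r b := by
  obtain ⟨H, hH, hab, hdom, hcod⟩ := h
  exact ⟨H, hH, ⟨hab, hdom.ge, hcod.ge⟩, hdom, hcod⟩

lemma BallIso.refl (ha : a ∉ P.X) : P.BallIso r a a := by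
  refine ⟨{zw | zw.1 ∈ P.dev.nbhd r a ∧ zw.1 = zw.2}, ?_, ⟨mem_nbhd_self r a, rfl⟩, ?_, ?_⟩
  · refine ⟨?_, ?_, ?_, ?_, ?_, ?_⟩ <;> simp only [Set.mem_ofPred_eq, and_imp]
    · exact fun z _ hz _ => not_mem_of_mem_nbhd ha hz
    · rintro z _ hz rfl
      exact not_mem_of_mem_nbhd ha hz
    · rintro z _ - rfl
      rfl
    · rintro z _ _ - rfl -
      rfl
    · rintro z _ z' _ - rfl - rfl
      rfl
    · rintro z _ z' _ - rfl - rfl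
      rfl
  · ext z
    simp
  · ext z
    simp

lemma BallIso.symm (h : P.BallIso r a b) : P.BallIso r b a := by
  obtain ⟨H, hH, hab, hdom, hcod⟩ := h
  exact ⟨H.inv, hH.inv, hab, hcod, hdom⟩

lemma BallIso.trans {c : V} (h : P.BallIso r a b) (h' : P.BallIso r b c) : P.BallIso r a c := by
  obtain ⟨H, hH, hab, hdom, hcod⟩ := h
  obtain ⟨H', hH', hbc, hdom', hcod'⟩ := h'
  refine ⟨H.comp H', hH.comp hH', ⟨b, hab, hbc⟩, subset_antisymm ?_ ?_, subset_antisymm ?_ ?_⟩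
  · rintro z ⟨w, y, hzy, -⟩
    exact hdom ▸ ⟨y, hzy⟩
  · intro z hz
    obtain ⟨y, hzy⟩ := hdom.ge hz
    have hy : y ∈ H'.dom := by rw [hdom', ← hcod]; exact ⟨z, hzy⟩
    obtain ⟨w, hyw⟩ := hy
    exact ⟨w, y, hzy, hyw⟩
  · rintro w ⟨z, y, -, hyw⟩
    exact hcod' ▸ ⟨y, hyw⟩
  · intro w hw
    obtain ⟨y, hyw⟩ := hcod'.ge hw
    have hy : y ∈ H.cod := by rw [hcod, ← hdom']; exact ⟨w, hyw⟩
    obtain ⟨z, hzy⟩ := hy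
    exact ⟨z, y, hzy, hyw⟩

lemma Untouched.not_mem_nbhd (h : P.Untouched H w) (hv : v ∉ P.X)
    (hsub : ↑(P.dev.nbhd r v) ⊆ H.dom) : w ∉ P.dev.nbhd r v := fun hw =>
  h.elim (not_mem_of_mem_nbhd hv hw) fun hd => hd.1 (hsub hw)

lemma Matched.eq_iff_and_adj_iff_of_untouched (hH : P.IsPartialIso H) (h : P.Matched H r a b)
    (hr : 1 ≤ r) (hw : P.Untouched H w) : (a = w ↔ b = w) ∧ (G.Adj a w ↔ G.Adj b w) := by
  have ha := hH.left_not_mem h.1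
  have hb := hH.right_not_mem h.1
  by_cases hwX : w ∈ P.X
  · exact ⟨iff_of_false (fun e => ha (e ▸ hwX)) (fun e => hb (e ▸ hwX)),
      hH.adj_iff_of_mem h.1 hwX⟩
  obtain ⟨hwd, hwc⟩ := hw.resolve_left hwX
  have haw : a ≠ w := fun e => hwd (e ▸ ⟨b, h.1⟩)
  have hbw : b ≠ w := fun e => hwc (e ▸ ⟨a, h.1⟩)
  have hda : ¬P.dev.Adj a w := fun hd => hwd (h.2.1 (nbhd_mono hr a (mem_nbhd_one_of_adj hd)))
  have hdb : ¬P.dev.Adj b w := fun hd => hwc (h.2.2 (nbhd_mono hr b (mem_nbhd_one_of_adj hd)))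
  exact ⟨iff_of_false haw hbw, adj_iff_adj_of_col_eq ha hwX hb hwX haw hbw (hH.col_eq h.1) rfl
    (iff_of_false hda hdb)⟩

namespace LocallyEquiv

variable {ι : Type*} {f g : ι → V}

lemma eq_iff_and_adj_iff (h : P.LocallyEquiv r f g) (hr : 1 ≤ r) (i j : ι) :
    (f i = f j ↔ g i = g j) ∧ (G.Adj (f i) (f j) ↔ G.Adj (g i) (g j)) := by
  obtain ⟨H, hH, hfg⟩ := h
  rcases hfg i with hi | ⟨hi, hiu⟩ <;> rcases hfg j with hj | ⟨hj, hju⟩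
  · exact ⟨hH.eq_iff hi.1 hj.1, hH.adj_iff hi.1 hj.1⟩
  · rw [← hj]
    exact hi.eq_iff_and_adj_iff_of_untouched hH hr hju
  · obtain ⟨heq, hadj⟩ := hj.eq_iff_and_adj_iff_of_untouched hH hr hiu
    rw [← hi, eq_comm, heq, eq_comm, G.adj_comm, hadj, G.adj_comm]
    exact ⟨Iff.rfl, Iff.rfl⟩
  · rw [← hi, ← hj]
    exact ⟨Iff.rfl, Iff.rfl⟩

lemma symm (h : P.LocallyEquiv r f g) : P.LocallyEquiv r g f := by
  obtain ⟨H, hH, hfg⟩ := h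
  exact ⟨H.inv, hH.inv, fun i => (hfg i).imp Matched.inv fun ⟨hi, hu⟩ => ⟨hi.symm, hi ▸ hu.inv⟩⟩

lemma of_le (h : P.LocallyEquiv s f g) (hrs : r ≤ s) : P.LocallyEquiv r f g := by
  obtain ⟨H, hH, hfg⟩ := h
  exact ⟨H, hH, fun i => (hfg i).imp_left (·.of_le hrs)⟩

lemma comp {ι' : Type*} (h : P.LocallyEquiv r f g) (e : ι' → ι) :
    P.LocallyEquiv r (f ∘ e) (g ∘ e) := by
  obtain ⟨H, hH, hfg⟩ := h
  exact ⟨H, hH, fun i => hfg (e i)⟩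

end LocallyEquiv

/-! ### The back-and-forth step -/

variable {ι : Type*} {f g : ι → V}

variable (P) in
def matchedNbhds (H : SetRel V V) (s r : ℕ) (f g : ι → V) : Set V :=
  {z | ∃ i, P.Matched H s (f i) (g i) ∧ z ∈ P.dev.nbhd r (f i)}

lemma Matched.restrict_matchedNbhds (hH : P.IsPartialIso H) {i : ι}
    (hi : P.Matched H (3 * r + 1) (f i) (g i)) {T : Set V}
    (hT : P.matchedNbhds H (3 * r + 1) r f g ⊆ T) :
    P.Matched (H ∩ Prod.fst ⁻¹' T) r (f i) (g i) :=
  (hi.of_le (by omega)).restrict hH fun _ hz => hT ⟨i, hi, hz⟩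

lemma locallyEquiv_extend_of_transfer (hH' : P.IsPartialIso H')
    (hfg : ∀ i, P.Corresponds H (3 * r + 1) (f i) (g i))
    (hmatched : ∀ i, P.Matched H (3 * r + 1) (f i) (g i) → P.Matched H' r (f i) (g i))
    (huntouched : ∀ i, P.Untouched H (f i) → P.Untouched H' (f i))
    {a b : V} (hab : P.Corresponds H' r a b) :
    P.LocallyEquiv r (fun o : Option ι => o.elim a f) (fun o : Option ι => o.elim b g) := by
  refine ⟨H', hH', ?_⟩
  rintro (_ | i)
  · exact hab
  · exact (hfg i).imp (hmatched i) fun ⟨hi, hu⟩ => ⟨hi, huntouched i hu⟩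

lemma exists_extend_of_near_left (hH : P.IsPartialIso H)
    (hfg : ∀ i, P.Corresponds H (3 * r + 1) (f i) (g i)) {i₀ : ι}
    (hi₀ : P.Matched H (3 * r + 1) (f i₀) (g i₀)) (ha : a ∈ P.dev.nbhd (2 * r + 1) (f i₀)) :
    ∃ b, P.LocallyEquiv r (fun o : Option ι => o.elim a f) (fun o : Option ι => o.elim b g) := by
  obtain ⟨b, hab⟩ := hi₀.2.1 (nbhd_mono (by omega) _ ha)
  have hmatched := (hi₀.matched_of_mem_nbhd hH hab ha).2
  exact ⟨b, locallyEquiv_extend_of_transfer (hH.mono Set.inter_subset_left) hfg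
    (fun i hi => hi.restrict_matchedNbhds hH Set.subset_union_left)
    (fun i hu => hu.mono Set.inter_subset_left)
    (Or.inl (hmatched.restrict hH Set.subset_union_right))⟩

lemma locallyEquiv_extend_self_of_far (hH : P.IsPartialIso H)
    (hfg : ∀ i, P.Corresponds H (3 * r + 1) (f i) (g i))
    (hf : ∀ i, P.Matched H (3 * r + 1) (f i) (g i) → a ∉ P.dev.nbhd (2 * r + 1) (f i))
    (hg : ∀ i, P.Matched H (3 * r + 1) (f i) (g i) → a ∉ P.dev.nbhd (2 * r + 1) (g i)) :
    P.LocallyEquiv r (fun o : Option ι => o.elim a f) (fun o : Option ι => o.elim a g) := by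
  refine locallyEquiv_extend_of_transfer (hH.mono Set.inter_subset_left) hfg
    (fun i hi => hi.restrict_matchedNbhds hH subset_rfl)
    (fun i hu => hu.mono Set.inter_subset_left) (Or.inr ⟨rfl, Or.inr ⟨?_, ?_⟩⟩)
  · rintro ⟨w, -, i, hi, ha⟩
    exact hf i hi (nbhd_mono (by omega) _ ha)
  · rintro ⟨z, hza, i, hi, hz⟩
    exact hg i hi (nbhd_mono (by omega) _ ((hi.of_le (by omega)).mem_nbhd_of_mem hH hza hz))

/-- The counting step of the back-and-forth: in a finite graph, the inverse of `H` maps the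
candidate partners near the right-hand side injectively into those near the left-hand side,
so some candidate lies far from the right-hand side. -/
lemma exists_ballIso_far (hH : P.IsPartialIso H)
    (hfg : ∀ i, P.Corresponds H (3 * r + 1) (f i) (g i))
    (hf : ∀ i, P.Matched H (3 * r + 1) (f i) (g i) → a ∉ P.dev.nbhd (2 * r + 1) (f i)) {i₁ : ι}
    (hi₁ : P.Matched H (3 * r + 1) (f i₁) (g i₁)) (ha : a ∈ P.dev.nbhd (2 * r + 1) (g i₁)) :
    ∃ b, P.BallIso r a b ∧
      (∀ i, P.Matched H (3 * r + 1) (f i) (g i) → b ∉ P.dev.nbhd (2 * r + 1) (g i)) ∧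
      (∀ i, ¬P.Matched H (3 * r + 1) (f i) (g i) → b ∉ P.dev.nbhd r (f i)) := by
  set M := fun i => P.Matched H (3 * r + 1) (f i) (g i)
  have haX : a ∉ P.X := not_mem_of_mem_nbhd (hH.right_not_mem hi₁.1) ha
  by_contra! hbad
  set T : Finset V := {v | P.BallIso r a v ∧ ∀ i, ¬M i → v ∉ P.dev.nbhd r (f i)}
  set A : Finset V := {v ∈ T | ∃ i, M i ∧ v ∈ P.dev.nbhd (2 * r + 1) (f i)}
  set B : Finset V := {v ∈ T | ∃ i, M i ∧ v ∈ P.dev.nbhd (2 * r + 1) (g i)}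
  have hAB : A ⊆ B := by
    intro v hv
    obtain ⟨hvT, -⟩ := mem_filter.mp hv
    refine mem_filter.mpr ⟨hvT, ?_⟩
    by_contra! hfar
    simp only [T, mem_filter, mem_univ, true_and] at hvT
    obtain ⟨hva, hvf⟩ := hvT
    obtain ⟨i, hi, hvi⟩ := hbad v hva hfar
    exact hvf i hi hvi
  have hBA : #B ≤ #A := by
    refine card_le_card_of_forall_subsingleton' (fun z v => (z, v) ∈ H) (fun v hv => ?_)
      fun z _ v hv v' hv' => (hH.eq_iff hv.2 hv'.2).mp rfl
    obtain ⟨hvT, i, hi, hvi⟩ := mem_filter.mp hv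
    simp only [T, mem_filter, mem_univ, true_and] at hvT
    obtain ⟨hva, -⟩ := hvT
    obtain ⟨z, hzv⟩ := hi.2.2 (nbhd_mono (by omega) _ hvi)
    obtain ⟨hzi, hvz⟩ := hi.inv.matched_of_mem_nbhd hH.inv hzv hvi
    have hzv' : P.Matched H r z v := hvz.inv
    refine ⟨z, mem_filter.mpr ⟨mem_filter.mpr ⟨mem_univ z, hva.trans (hzv'.ballIso hH).symm,
      fun j hj hz => ?_⟩, ⟨i, hi, hzi⟩⟩, hzv⟩
    have hu := ((hfg j).resolve_left hj).2
    exact hu.not_mem_nbhd (hH.left_not_mem hzv) hzv'.2.1 (mem_nbhd_comm.mp hz)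
  have haB : a ∈ B := by
    refine mem_filter.mpr ⟨mem_filter.mpr ⟨mem_univ a, BallIso.refl haX, fun i hi hai => ?_⟩,
      ⟨i₁, hi₁, ha⟩⟩
    have hu := ((hfg i).resolve_left hi).2.inv
    exact hu.not_mem_nbhd haX (coe_nbhd_subset_of_mem ha hi₁.2.2 (by omega))
      (mem_nbhd_comm.mp hai)
  rw [← eq_of_subset_of_card_le hAB hBA] at haB
  obtain ⟨-, i, hi, hai⟩ := mem_filter.mp haB
  exact hf i hi hai

lemma exists_extend_of_near_right (hH : P.IsPartialIso H)
    (hfg : ∀ i, P.Corresponds H (3 * r + 1) (f i) (g i))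
    (hf : ∀ i, P.Matched H (3 * r + 1) (f i) (g i) → a ∉ P.dev.nbhd (2 * r + 1) (f i)) {i₁ : ι}
    (hi₁ : P.Matched H (3 * r + 1) (f i₁) (g i₁)) (ha : a ∈ P.dev.nbhd (2 * r + 1) (g i₁)) :
    ∃ b, P.LocallyEquiv r (fun o : Option ι => o.elim a f) (fun o : Option ι => o.elim b g) := by
  obtain ⟨b, hab, hbg, hbf⟩ := exists_ballIso_far hH hfg hf hi₁ ha
  obtain ⟨H₀, hH₀, hm₀, hdom₀, hcod₀⟩ := hab.matched
  have haX : a ∉ P.X := not_mem_of_mem_nbhd (hH.right_not_mem hi₁.1) ha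
  have hfar : ∀ ⦃z w z' w'⦄, (z, w) ∈ H ∩ Prod.fst ⁻¹' P.matchedNbhds H (3 * r + 1) r f g →
      (z', w') ∈ H₀ → 1 < P.dev.edist z z' ∧ 1 < P.dev.edist w w' := by
    rintro z w z' w' ⟨hzw, i, hi, hz⟩ hzw'
    have hz' : z' ∈ P.dev.nbhd r a := by rw [← Finset.mem_coe, ← hdom₀]; exact ⟨w', hzw'⟩
    have hw' : w' ∈ P.dev.nbhd r b := by rw [← Finset.mem_coe, ← hcod₀]; exact ⟨z', hzw'⟩
    have hw : w ∈ P.dev.nbhd r (g i) := (hi.of_le (by omega)).mem_nbhd_of_mem hH hzw hz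
    exact ⟨one_lt_edist_of_not_mem_nbhd hz hz' (hf i hi) (by omega),
      one_lt_edist_of_not_mem_nbhd hw hw' (hbg i hi) (by omega)⟩
  refine ⟨b, locallyEquiv_extend_of_transfer ((hH.mono Set.inter_subset_left).union hH₀ hfar) hfg
    (fun i hi => (hi.restrict_matchedNbhds hH subset_rfl).mono Set.subset_union_left)
    (fun i hu => (hu.mono Set.inter_subset_left).union ?_)
    (Or.inl (hm₀.mono Set.subset_union_right))⟩
  by_cases hX : f i ∈ P.X
  · exact Or.inl hX
  have hi : ¬P.Matched H (3 * r + 1) (f i) (g i) := fun hi => (hu.resolve_left hX).1 ⟨g i, hi.1⟩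
  rw [Untouched, hdom₀, hcod₀, Finset.mem_coe, Finset.mem_coe, mem_nbhd_comm (a := b)]
  exact Or.inr ⟨hu.inv.not_mem_nbhd haX (coe_nbhd_subset_of_mem ha hi₁.2.2 (by omega)),
    hbf i hi⟩

lemma LocallyEquiv.exists_extend (h : P.LocallyEquiv (3 * r + 1) f g) (a : V) :
    ∃ b, P.LocallyEquiv r (fun o : Option ι => o.elim a f) (fun o : Option ι => o.elim b g) := by
  obtain ⟨H, hH, hfg⟩ := h
  by_cases hf : ∃ i, P.Matched H (3 * r + 1) (f i) (g i) ∧ a ∈ P.dev.nbhd (2 * r + 1) (f i)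
  · obtain ⟨i, hi, ha⟩ := hf
    exact exists_extend_of_near_left hH hfg hi ha
  push Not at hf
  by_cases hg : ∃ i, P.Matched H (3 * r + 1) (f i) (g i) ∧ a ∈ P.dev.nbhd (2 * r + 1) (g i)
  · obtain ⟨i, hi, ha⟩ := hg
    exact exists_extend_of_near_right hH hfg hf hi ha
  push Not at hg
  exact ⟨a, locallyEquiv_extend_self_of_far hH hfg hf hg⟩

end Presentation

/-- The radius needed to survive `d` rounds of the back-and-forth game: a round played at
radius `3 * r + 1` leaves radius `r`. -/
def efRadius : ℕ → ℕ
  | 0 => 1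
  | d + 1 => 3 * efRadius d + 1

lemma one_le_efRadius (d : ℕ) : 1 ≤ efRadius d := by
  cases d <;> simp [efRadius]

lemma efRadius_mono : Monotone efRadius :=
  monotone_nat_of_le_succ fun d => by simp only [efRadius]; omega

namespace Presentation

open SimpleGraph BoundedFormula

section

variable {V : Type*} [Fintype V] {G : SimpleGraph V} {C : Type*} {P : Presentation G C} {r : ℕ}

lemma LocallyEquiv.exists_snoc {α : Type*} {n : ℕ} {v v' : α → V} {xs xs' : Fin n → V}
    (h : P.LocallyEquiv (3 * r + 1) (Sum.elim v xs) (Sum.elim v' xs')) (a : V) :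
    ∃ b, P.LocallyEquiv r (Sum.elim v (Fin.snoc xs a)) (Sum.elim v' (Fin.snoc xs' b)) := by
  obtain ⟨b, hb⟩ := h.exists_extend a
  refine ⟨b, ?_⟩
  simpa only [option_elim_comp_snocIndex] using hb.comp snocIndex

theorem realize_iff_of_locallyEquiv {α : Type*} {n : ℕ} (φ : Language.graph.BoundedFormula α n)
    {v v' : α → V} {xs xs' : Fin n → V}
    (h : P.LocallyEquiv (efRadius φ.quantifierDepth) (Sum.elim v xs) (Sum.elim v' xs')) :
    letI := G.structure
    φ.Realize v xs ↔ φ.Realize v' xs' := by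
  let := G.structure
  induction φ with
  | falsum => exact Iff.rfl
  | equal t₁ t₂ =>
    obtain ⟨i, rfl⟩ := t₁.exists_eq_var_of_graph
    obtain ⟨j, rfl⟩ := t₂.exists_eq_var_of_graph
    exact (h.eq_iff_and_adj_iff (one_le_efRadius _) i j).1
  | rel R ts =>
    cases R
    obtain ⟨i, hi⟩ := (ts 0).exists_eq_var_of_graph
    obtain ⟨j, hj⟩ := (ts 1).exists_eq_var_of_graph
    show G.Adj ((ts 0).realize _) ((ts 1).realize _) ↔ G.Adj ((ts 0).realize _) ((ts 1).realize _)
    rw [hi, hj]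
    exact (h.eq_iff_and_adj_iff (one_le_efRadius _) i j).2
  | imp φ ψ ihφ ihψ =>
    exact imp_congr (ihφ (h.of_le (efRadius_mono (le_max_left _ _))))
      (ihψ (h.of_le (efRadius_mono (le_max_right _ _))))
  | all φ ih =>
    simp only [realize_all]
    refine ⟨fun hφ a => ?_, fun hφ a => ?_⟩
    · obtain ⟨b, hb⟩ := h.symm.exists_snoc a
      exact (ih hb.symm).mp (hφ b)
    · obtain ⟨b, hb⟩ := h.exists_snoc a
      exact (ih hb).mpr (hφ b)

end

section

variable {V : Type} [Fintype V] {G : SimpleGraph V} {C : Type*} {P : Presentation G C}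
  {R N : ℕ} {u u' w : V}

lemma BallIso.interp_adj_iff (ψ : Language.graph.Formula (Fin 2))
    (h : P.BallIso (efRadius ψ.quantifierDepth) u u')
    (hw : w ∉ P.dev.nbhd (efRadius ψ.quantifierDepth) u)
    (hw' : w ∉ P.dev.nbhd (efRadius ψ.quantifierDepth) u') :
    (interpGraphPlain G ψ).Adj u w ↔ (interpGraphPlain G ψ).Adj u' w := by
  obtain ⟨H, hH, hm, hdom, hcod⟩ := h.matched
  have hcorr : ∀ x x' : V, x = u ∧ x' = u' ∨ x = w ∧ x' = w →
      P.Corresponds H (efRadius ψ.quantifierDepth) x x' := by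
    rintro x x' (⟨rfl, rfl⟩ | ⟨rfl, rfl⟩)
    · exact Or.inl hm
    · exact Or.inr ⟨rfl, Or.inr ⟨by rwa [hdom], by rwa [hcod]⟩⟩
  have hlocal : ∀ x y x' y' : V, (x = u ∧ x' = u' ∨ x = w ∧ x' = w) →
      (y = u ∧ y' = u' ∨ y = w ∧ y' = w) →
      P.LocallyEquiv (efRadius (ψ : Language.graph.BoundedFormula (Fin 2) 0).quantifierDepth)
        (Sum.elim ![x, y] (default : Fin 0 → V)) (Sum.elim ![x', y'] default) := by
    intro x y x' y' hx hy
    refine ⟨H, hH, ?_⟩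
    rintro (j | j)
    · fin_cases j
      exacts [hcorr x x' hx, hcorr y y' hy]
    · exact j.elim0
  have hu : u ≠ w := fun e => hw (e ▸ mem_nbhd_self _ u)
  have hu' : u' ≠ w := fun e => hw' (e ▸ mem_nbhd_self _ u')
  have h₁ := realize_iff_of_locallyEquiv _ (hlocal u w u' w (by simp) (by simp))
  have h₂ := realize_iff_of_locallyEquiv _ (hlocal w u w u' (by simp) (by simp))
  exact and_congr (iff_of_true hu hu') (or_congr h₁ h₂)

lemma BallIso.nearTwin_interp (ψ : Language.graph.Formula (Fin 2))
    (h : P.BallIso (efRadius ψ.quantifierDepth) u u')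
    (hN : ∀ x, #(P.dev.nbhd (efRadius ψ.quantifierDepth) x) ≤ N) :
    nearTwin (interpGraphPlain G ψ) (2 * N) u u' := by
  set R := efRadius ψ.quantifierDepth
  have hsub : symmDiff ((interpGraphPlain G ψ).neighborSet u)
      ((interpGraphPlain G ψ).neighborSet u') ⊆ ↑(P.dev.nbhd R u ∪ P.dev.nbhd R u') := by
    intro w hw
    by_contra hw'
    simp only [coe_union, Set.mem_union, Finset.mem_coe, not_or] at hw'
    have := h.interp_adj_iff ψ hw'.1 hw'.2
    rw [Set.mem_symmDiff] at hw
    simp only [SimpleGraph.mem_neighborSet] at hw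
    tauto
  calc _ ≤ (↑(P.dev.nbhd R u ∪ P.dev.nbhd R u') : Set V).ncard := Set.ncard_le_ncard hsub
    _ ≤ #(P.dev.nbhd R u) + #(P.dev.nbhd R u') := by
      rw [Set.ncard_coe_finset]; exact card_union_le _ _
    _ ≤ 2 * N := by linarith [hN u, hN u']

/-! ### Counting ball types -/

abbrev BallCode (N : ℕ) (L : Type*) : Type _ :=
  (Fin N → Option L) × (Fin N → Fin N → Prop) × (Fin N → Prop)

variable (P) in
/-- The `R`-ball around `u` read along the enumeration `toList`, which fits into `Fin N` once
the ball has at most `N` vertices. -/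
noncomputable def ballCode {L : Type*} (R N : ℕ) (lab : V → L) (u : V) : BallCode N L :=
  let l := (P.dev.nbhd R u).toList
  (fun i => l[i.1]?.map lab,
    fun i j => ∃ z w, l[i.1]? = some z ∧ l[j.1]? = some w ∧ P.dev.Adj z w,
    fun i => l[i.1]? = some u)

variable (P) in
noncomputable def ballMatch (R N : ℕ) (u u' : V) : SetRel V V :=
  {zw | ∃ i : Fin N, (P.dev.nbhd R u).toList[i.1]? = some zw.1 ∧
    (P.dev.nbhd R u').toList[i.1]? = some zw.2}

lemma ballMatch_inv : (P.ballMatch R N u u').inv = P.ballMatch R N u' u := by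
  ext ⟨z, w⟩
  simp only [SetRel.mem_inv, ballMatch, Set.mem_ofPred_eq, and_comm]

lemma dom_ballMatch {L : Type*} {lab : V → L} (hN : #(P.dev.nbhd R u) ≤ N)
    (h : P.ballCode R N lab u = P.ballCode R N lab u') :
    (P.ballMatch R N u u').dom = P.dev.nbhd R u := by
  ext z
  refine ⟨fun ⟨w, i, hz, _⟩ => ?_, fun hz => ?_⟩
  · exact Finset.mem_toList.mp (List.mem_iff_getElem?.mpr ⟨i, hz⟩)
  obtain ⟨i, hi⟩ := exists_fin_getElem?_toList_eq hN hz
  have hcode : (P.dev.nbhd R u).toList[i.1]?.map lab = (P.dev.nbhd R u').toList[i.1]?.map lab :=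
    congrFun (congrArg Prod.fst h) i
  rw [hi, Option.map_some] at hcode
  obtain ⟨w, hw, -⟩ := Option.map_eq_some_iff.mp hcode.symm
  exact ⟨w, i, hi, hw⟩

lemma isPartialIso_ballMatch {L : Type*} {lab : V → L}
    (hlab : ∀ z z', lab z = lab z' → P.col z = P.col z' ∧ ∀ x ∈ P.X, (G.Adj z x ↔ G.Adj z' x))
    (hu : u ∉ P.X) (hu' : u' ∉ P.X) (h : P.ballCode R N lab u = P.ballCode R N lab u') :
    P.IsPartialIso (P.ballMatch R N u u') := by
  have hlab' {z w : V} {i : Fin N} (hz : (P.dev.nbhd R u).toList[i.1]? = some z)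
      (hw : (P.dev.nbhd R u').toList[i.1]? = some w) : lab z = lab w := by
    have hcode := congrFun (congrArg Prod.fst h) i
    simp only [ballCode, hz, hw, Option.map_some, Option.some.injEq] at hcode
    exact hcode
  have hmem {l : List V} {i : ℕ} {z : V} (hz : l[i]? = some z) : z ∈ l :=
    List.mem_iff_getElem?.mpr ⟨i, hz⟩
  refine ⟨?_, ?_, ?_, ?_, ?_, ?_⟩
  · rintro z w ⟨i, hz, -⟩
    exact not_mem_of_mem_nbhd hu (Finset.mem_toList.mp (hmem hz))
  · rintro z w ⟨i, -, hw⟩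
    exact not_mem_of_mem_nbhd hu' (Finset.mem_toList.mp (hmem hw))
  · rintro z w ⟨i, hz, hw⟩
    exact (hlab z w (hlab' hz hw)).1
  · rintro z w x ⟨i, hz, hw⟩
    exact (hlab z w (hlab' hz hw)).2 x
  · rintro z w z' w' ⟨i, hz, hw⟩ ⟨j, hz', hw'⟩
    rw [(Finset.nodup_toList _).eq_iff_of_getElem?_eq_some hz hz',
      (Finset.nodup_toList _).eq_iff_of_getElem?_eq_some hw hw']
  · rintro z w z' w' ⟨i, hz, hw⟩ ⟨j, hz', hw'⟩
    have hdev := congrFun (congrFun (congrArg (·.2.1) h) i) j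
    simp only [ballCode, hz, hz', hw, hw', Option.some.injEq, exists_and_left,
      exists_eq_left'] at hdev
    exact Iff.of_eq hdev

lemma ballIso_of_ballCode_eq {L : Type*} {lab : V → L}
    (hlab : ∀ z z', lab z = lab z' → P.col z = P.col z' ∧ ∀ x ∈ P.X, (G.Adj z x ↔ G.Adj z' x))
    (hN : ∀ x, #(P.dev.nbhd R x) ≤ N) (hu : u ∉ P.X) (hu' : u' ∉ P.X)
    (h : P.ballCode R N lab u = P.ballCode R N lab u') : P.BallIso R u u' := by
  refine ⟨_, isPartialIso_ballMatch hlab hu hu' h, ?_, dom_ballMatch (hN u) h, ?_⟩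
  · obtain ⟨i, hi⟩ := exists_fin_getElem?_toList_eq (hN u) (mem_nbhd_self R u)
    exact ⟨i, hi, cast (congrFun (congrArg (·.2.2) h) i) hi⟩
  · rw [← SetRel.dom_inv, ballMatch_inv]
    exact dom_ballMatch (hN u') h.symm

lemma exists_label [DecidableEq C] {p Xb : ℕ} (hcol : #(univ.image P.col) ≤ p)
    (hX : P.X.ncard ≤ Xb) :
    ∃ lab : V → (Fin p → Prop) × (Fin Xb → Prop),
      ∀ z z', lab z = lab z' → P.col z = P.col z' ∧ ∀ x ∈ P.X, (G.Adj z x ↔ G.Adj z' x) := by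
  set lc := (univ.image P.col).toList
  set lx := P.X.toFinset.toList
  refine ⟨fun z => (fun i => lc[i.1]? = some (P.col z),
      fun j => ∃ x, lx[j.1]? = some x ∧ G.Adj z x),
    fun z z' h => ⟨?_, fun x hx => ?_⟩⟩
  · obtain ⟨i, hi⟩ := exists_fin_getElem?_toList_eq hcol (mem_image_of_mem P.col (mem_univ z))
    have hi' : lc[i.1]? = some (P.col z') := cast (congrFun (congrArg Prod.fst h) i) hi
    exact Option.some.inj (hi.symm.trans hi')
  · obtain ⟨j, hj⟩ : ∃ j : Fin Xb, lx[j.1]? = some x := exists_fin_getElem?_toList_eq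
      (by rwa [← Set.ncard_eq_toFinset_card']) (Set.mem_toFinset.mpr hx)
    have hadj : (∃ y, lx[j.1]? = some y ∧ G.Adj z y) = (∃ y, lx[j.1]? = some y ∧ G.Adj z' y) :=
      congrFun (congrArg Prod.snd h) j
    simp only [hj, Option.some.injEq, exists_eq_left'] at hadj
    exact Iff.of_eq hadj

theorem nearCovered_interpGraphPlain [DecidableEq C] (ψ : Language.graph.Formula (Fin 2))
    {p Xb d : ℕ}
    (hcol : #(univ.image P.col) ≤ p) (hX : P.X.ncard ≤ Xb) (hdeg : ∀ v, P.dev.degree v ≤ d) :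
    NearCovered (interpGraphPlain G ψ) (2 * (d + 1) ^ efRadius ψ.quantifierDepth)
      (Xb + Fintype.card (Option (BallCode ((d + 1) ^ efRadius ψ.quantifierDepth)
        ((Fin p → Prop) × (Fin Xb → Prop))))) := by
  set R := efRadius ψ.quantifierDepth
  set N := (d + 1) ^ R
  have hN : ∀ x, #(P.dev.nbhd R x) ≤ N := card_nbhd_le hdeg R
  obtain ⟨lab, hlab⟩ := P.exists_label hcol hX
  obtain ⟨S, hS, hSv⟩ := exists_ncard_le_forall_exists_eq fun v =>
    if v ∈ P.X then none else some (P.ballCode R N lab v)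
  refine ⟨P.X ∪ S, (Set.ncard_union_le _ _).trans (by omega), fun v => ?_⟩
  by_cases hv : v ∈ P.X
  · exact ⟨v, Or.inl hv, nearTwin_self _ _ v⟩
  obtain ⟨s, hs, hsv⟩ := hSv v
  by_cases hs' : s ∈ P.X
  · simp [hs', hv] at hsv
  simp only [hs', hv, if_false, Option.some.injEq] at hsv
  exact ⟨s, Or.inr hs, (ballIso_of_ballCode_eq hlab hN hs' hv hsv).nearTwin_interp ψ hN⟩

end

end Presentation

/-! ### Near-uniform graphs -/

section TwinPresentation

variable {V : Type*} (G : SimpleGraph V) (k : ℕ)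

def majorityAdj (A B : Finset V) : Prop := #A * #B < 2 * #{q ∈ A ×ˢ B | G.Adj q.1 q.2}

lemma majorityAdj_comm (A B : Finset V) : majorityAdj G A B ↔ majorityAdj G B A := by
  have : #{q ∈ A ×ˢ B | G.Adj q.1 q.2} = #{q ∈ B ×ˢ A | G.Adj q.1 q.2} := by
    refine card_nbij' Prod.swap Prod.swap ?_ ?_ (fun _ _ => rfl) (fun _ _ => rfl) <;>
      rintro ⟨a, b⟩ <;> simp [G.adj_comm, and_comm]
  rw [majorityAdj, majorityAdj, this, mul_comm]

variable [Fintype V]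

noncomputable def twinClass (u : V) : Finset V := {v | nearTwin G k u v}

/-- Vertices in twin classes of size at most `6 * k + 1` are exceptional, which leaves the
`6 * k + 2` rows needed by `card_filter_row_le_of_two_mul_le`. -/
noncomputable def twinPresentation : Presentation G (Finset V) where
  X := {v | #(twinClass G k v) ≤ 6 * k + 1}
  col := twinClass G k
  pat := majorityAdj G
  pat_comm := majorityAdj_comm G

variable {G k}

lemma mem_twinClass {u v : V} : v ∈ twinClass G k u ↔ nearTwin G k u v := by simp [twinClass]

lemma nearTwin_iff_card_filter {u v : V} :
    nearTwin G k u v ↔ #{w | ¬(G.Adj u w ↔ G.Adj v w)} ≤ k := by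
  rw [nearTwin, ← Set.ncard_coe_finset]
  convert Iff.rfl using 3
  ext w
  simp only [Set.mem_symmDiff, SimpleGraph.mem_neighborSet, coe_filter, mem_univ, true_and,
    Set.mem_ofPred_eq]
  tauto

lemma card_image_twinClass :
    #(univ.image (twinClass G k)) = {C : Set V | ∃ u, C = {v | nearTwin G k u v}}.ncard := by
  have : {C : Set V | ∃ u, C = {v | nearTwin G k u v}} =
      (↑) '' (↑(univ.image (twinClass G k)) : Set (Finset V)) := by
    ext C
    simp [twinClass, Set.ext_iff, eq_comm]
  rw [this, Set.ncard_image_of_injective _ Finset.coe_injective, Set.ncard_coe_finset]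

lemma twinClass_eq {u v : V} (hE : Equivalence (nearTwin G k)) (h : nearTwin G k u v) :
    twinClass G k u = twinClass G k v := by
  ext w
  simp only [mem_twinClass]
  exact ⟨hE.trans (hE.symm h), hE.trans h⟩

lemma card_filter_not_adj_iff_le (hE : Equivalence (nearTwin G k)) {a b c : V}
    (ha : a ∈ twinClass G k c) (hb : b ∈ twinClass G k c) (S : Finset V) :
    #{w ∈ S | ¬(G.Adj a w ↔ G.Adj b w)} ≤ k :=
  (card_le_card (filter_subset_filter _ (subset_univ S))).trans <| nearTwin_iff_card_filter.mp <|
    hE.trans (hE.symm (mem_twinClass.mp ha)) (mem_twinClass.mp hb)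

lemma card_filter_dev_adj_le (hE : Equivalence (nearTwin G k)) (u w₀ : V) :
    #{w ∈ twinClass G k w₀ | (twinPresentation G k).dev.Adj u w} ≤ 3 * k := by
  by_cases hu : u ∈ (twinPresentation G k).X
  · simp [filter_false_of_mem fun w _ (h : (twinPresentation G k).dev.Adj u w) => h.2.1 hu]
  have hI : 6 * k + 2 ≤ #(twinClass G k u) := by
    simp only [twinPresentation, Set.mem_ofPred_eq, not_le] at hu
    omega
  refine (card_le_card fun w hw => ?_).trans <|
    card_filter_not_iff_majority_le _ (twinClass G k w₀) G.Adj k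
    (fun i hi i' hi' => card_filter_not_adj_iff_le hE hi hi' _)
    (fun j hj j' hj' => ?_) hI (mem_twinClass.mpr (hE.refl u))
  · obtain ⟨hw, -, -, -, hdev⟩ := mem_filter.mp hw
    refine mem_filter.mpr ⟨hw, ?_⟩
    change ¬(G.Adj u w ↔ majorityAdj G (twinClass G k u) (twinClass G k w)) at hdev
    rwa [twinClass_eq hE (hE.symm (mem_twinClass.mp hw))] at hdev
  · simpa only [G.adj_comm _ j, G.adj_comm _ j'] using card_filter_not_adj_iff_le hE hj hj' _

lemma degree_dev_le (hE : Equivalence (nearTwin G k)) {p : ℕ}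
    (hp : #(univ.image (twinClass G k)) ≤ p) (u : V) :
    (twinPresentation G k).dev.degree u ≤ p * (3 * k) := by
  rw [← SimpleGraph.card_neighborFinset_eq_degree, SimpleGraph.neighborFinset_eq_filter]
  calc _ ≤ #((univ.image (twinClass G k)).biUnion
        fun C => {w ∈ C | (twinPresentation G k).dev.Adj u w}) := by
        refine card_le_card fun w hw => mem_biUnion.mpr ⟨twinClass G k w, mem_image_of_mem _
          (mem_univ w), mem_filter.mpr ⟨mem_twinClass.mpr (hE.refl w), (mem_filter.mp hw).2⟩⟩
    _ ≤ #(univ.image (twinClass G k)) * (3 * k) := card_biUnion_le_card_mul _ _ _ fun C hC => by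
        obtain ⟨w₀, -, rfl⟩ := mem_image.mp hC
        exact card_filter_dev_adj_le hE u w₀
    _ ≤ p * (3 * k) := by gcongr

lemma ncard_twinPresentation_X_le (hE : Equivalence (nearTwin G k)) {p : ℕ}
    (hp : #(univ.image (twinClass G k)) ≤ p) :
    (twinPresentation G k).X.ncard ≤ p * (6 * k + 1) := by
  set small := {C ∈ univ.image (twinClass G k) | #C ≤ 6 * k + 1}
  have hsub : (twinPresentation G k).X ⊆ ↑(small.biUnion id) := fun v hv =>
    mem_biUnion.mpr ⟨twinClass G k v, mem_filter.mpr ⟨mem_image_of_mem _ (mem_univ v), hv⟩,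
      mem_twinClass.mpr (hE.refl v)⟩
  calc _ ≤ #(small.biUnion id) := (Set.ncard_le_ncard hsub).trans_eq (Set.ncard_coe_finset _)
    _ ≤ #small * (6 * k + 1) := card_biUnion_le_card_mul _ _ _ fun C hC => (mem_filter.mp hC).2
    _ ≤ p * (6 * k + 1) := by gcongr; exact (card_filter_le _ _).trans hp

end TwinPresentation

theorem stmt16 (k₀ p : ℕ) (ψ : Language.graph.Formula (Fin 2)) :
    ∃ ℓ q : ℕ, ∀ (V : Type) [Fintype V] (G : SimpleGraph V),
      NearUniform G k₀ p → NearCovered (interpGraphPlain G ψ) ℓ q := by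
  exact ⟨_, _, fun V _ G ⟨k, hk, hE, hp⟩ =>
    have hp' : #(univ.image (twinClass G k)) ≤ p := card_image_twinClass.trans_le hp
    (twinPresentation G k).nearCovered_interpGraphPlain ψ hp'
      ((ncard_twinPresentation_X_le hE hp').trans
        (Nat.mul_le_mul_left p (by omega : 6 * k + 1 ≤ 6 * k₀ + 1)))
      fun v => (degree_dev_le hE hp' v).trans
        (Nat.mul_le_mul_left p (by omega : 3 * k ≤ 3 * k₀))⟩
end
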